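/- arXiv:math/0509236 — 11 statements merged into one kernel-verified Lean document; each statement's English description precedes it below -/
import Mathlib

section
/- The vector g_0 is orthogonal to g_n for every n ≥ 1, where the g_n are defined by the Kaczmarz recurrence g_0 = e_0, g_n = e_n - ∑_{i=0}^{n-1} ⟨e_n, e_i⟩ g_i. -/
open scoped ComplexInnerProductSpace

theorem kaczmarz_g0_orthogonal
    {H : Type*} [NormedAddCommGroup H] [InnerProductSpace ℂ H]
    (e g : ℕ → H) (he : ∀ n, ‖e n‖ = 1)
    (hg0 : g 0 = e 0)
    (hg : ∀ n, 0 < n → g n = e n - ∑ i ∈ Finset.range n, ⟪e i, e n⟫ • g i) :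
    ∀ n, 1 ≤ n → ⟪g 0, g n⟫ = 0 := by
  intro n
  induction n using Nat.strong_induction_on with
  | _ n ih =>
    intro hn
    rw [hg n hn, hg0]
    rw [inner_sub_right, inner_sum]
    have hsum : ∑ i ∈ Finset.range n, ⟪e 0, ⟪e i, e n⟫ • g i⟫
        = ⟪e 0, e n⟫ := by
      rw [Finset.sum_eq_single 0]
      · rw [inner_smul_right, hg0, inner_self_eq_norm_sq_to_K, he 0]
        push_cast; ring
      · intro i hi hi0
        rw [inner_smul_right]
        have : ⟪e 0, g i⟫ = 0 := by
          have := ih i (Finset.mem_range.mp hi) (Nat.one_le_iff_ne_zero.mpr hi0)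
          rwa [hg0] at this
        rw [this, mul_zero]
      · intro h
        exact absurd (Finset.mem_range.mpr hn) h
    rw [hsum, sub_self]
end

section
/- For the Kaczmarz algorithm iterates x_n one has x_n = ∑_{i=0}^n ⟨x, g_i⟩ e_i for all x ∈ H and n ≥ 0. -/
open scoped ComplexInnerProductSpace

/-- The Kaczmarz algorithm iterates: `kacz e x 0 = ⟨x,e₀⟩e₀`,
`kacz e x n = kacz e x (n-1) + ⟨x - kacz e x (n-1), e_n⟩ e_n`. -/
noncomputable def kacz {H : Type*} [NormedAddCommGroup H] [InnerProductSpace ℂ H]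
    (e : ℕ → H) (x : H) : ℕ → H
  | 0 => ⟪e 0, x⟫ • e 0
  | (n+1) => kacz e x n + ⟪e (n+1), x - kacz e x n⟫ • e (n+1)

theorem kaczmarz_iterate_eq_partial_sum
    {H : Type*} [NormedAddCommGroup H] [InnerProductSpace ℂ H]
    (e g : ℕ → H) (he : ∀ n, ‖e n‖ = 1)
    (hg0 : g 0 = e 0)
    (hg : ∀ n, 0 < n → g n = e n - ∑ i ∈ Finset.range n, ⟪e i, e n⟫ • g i) :
    ∀ (x : H) (n : ℕ), kacz e x n = ∑ i ∈ Finset.range (n + 1), ⟪g i, x⟫ • e i := by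
  intro x n
  induction n with
  | zero => simp [kacz, hg0]
  | succ n ih =>
    rw [Finset.sum_range_succ, ← ih]
    show kacz e x n + ⟪e (n+1), x - kacz e x n⟫ • e (n+1) = _
    congr 2
    rw [hg (n+1) (Nat.succ_pos n), inner_sub_left, sum_inner, inner_sub_right, ih, inner_sum]
    congr 1
    refine Finset.sum_congr rfl fun i _ => ?_
    rw [inner_smul_left, inner_smul_right, inner_conj_symm]; ring
end

section
/- For every x ∈ H and every n ≥ 1, ‖x - x_{n-1}‖² = ‖x - x_n‖² + |⟨x, g_n⟩|², and ‖x‖² = ‖x - x_0‖² + |⟨x, g_0⟩|². -/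
open scoped ComplexInnerProductSpace

lemma inner_g_eq {H : Type*} [NormedAddCommGroup H] [InnerProductSpace ℂ H]
    (e g : ℕ → H)
    (hg : ∀ n, 0 < n → g n = e n - ∑ i ∈ Finset.range n, ⟪e i, e n⟫ • g i)
    (x : H) (n : ℕ) (hn : 0 < n) :
    ⟪g n, x⟫ = ⟪e n, x⟫ - ∑ i ∈ Finset.range n, ⟪e n, e i⟫ * ⟪g i, x⟫ := by
  rw [hg n hn, inner_sub_left, sum_inner]
  congr 1
  refine Finset.sum_congr rfl fun i _ => ?_
  rw [inner_smul_left, ← inner_conj_symm (e n) (e i)]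

lemma kacz_eq {H : Type*} [NormedAddCommGroup H] [InnerProductSpace ℂ H]
    (e g : ℕ → H)
    (hg0 : g 0 = e 0)
    (hg : ∀ n, 0 < n → g n = e n - ∑ i ∈ Finset.range n, ⟪e i, e n⟫ • g i)
    (x : H) : ∀ n, kacz e x n = ∑ i ∈ Finset.range (n+1), ⟪g i, x⟫ • e i := by
  intro n
  induction n with
  | zero => simp [kacz, hg0]
  | succ m ih =>
    rw [Finset.sum_range_succ, ← ih]
    show kacz e x m + ⟪e (m+1), x - kacz e x m⟫ • e (m+1) = _
    congr 2
    rw [inner_sub_right, ih, inner_sum,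
      inner_g_eq e g hg x (m+1) (Nat.succ_pos m)]
    congr 1
    refine Finset.sum_congr rfl fun i _ => ?_
    rw [inner_smul_right]
    ring

lemma kacz_coef {H : Type*} [NormedAddCommGroup H] [InnerProductSpace ℂ H]
    (e g : ℕ → H)
    (hg0 : g 0 = e 0)
    (hg : ∀ n, 0 < n → g n = e n - ∑ i ∈ Finset.range n, ⟪e i, e n⟫ • g i)
    (x : H) (n : ℕ) :
    ⟪e (n+1), x - kacz e x n⟫ = ⟪g (n+1), x⟫ := by
  rw [inner_sub_right, kacz_eq e g hg0 hg x n, inner_sum,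
    inner_g_eq e g hg x (n+1) (Nat.succ_pos n)]
  congr 1
  refine Finset.sum_congr rfl fun i _ => ?_
  rw [inner_smul_right]
  ring

theorem kaczmarz_error_pythagoras
    {H : Type*} [NormedAddCommGroup H] [InnerProductSpace ℂ H]
    (e g : ℕ → H) (he : ∀ n, ‖e n‖ = 1)
    (hg0 : g 0 = e 0)
    (hg : ∀ n, 0 < n → g n = e n - ∑ i ∈ Finset.range n, ⟪e i, e n⟫ • g i) :
    ∀ x : H,
      ‖x‖ ^ 2 = ‖x - kacz e x 0‖ ^ 2 + ‖⟪g 0, x⟫‖ ^ 2 ∧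
      ∀ n, 1 ≤ n →
        ‖x - kacz e x (n - 1)‖ ^ 2 = ‖x - kacz e x n‖ ^ 2 + ‖⟪g n, x⟫‖ ^ 2 := by
  intro x
  have hnorm : ∀ n (c : ℂ), ‖c • e n‖ ^ 2 = ‖c‖ ^ 2 := by
    intro n c
    rw [norm_smul, he n, mul_one]
  have hself : ∀ n, (⟪e n, e n⟫ : ℂ) = 1 := by
    intro n
    simp [inner_self_eq_norm_sq_to_K (𝕜 := ℂ), he n]
  constructor
  · have h0 : x = (x - kacz e x 0) + ⟪e 0, x⟫ • e 0 := by
      show x = (x - ⟪e 0, x⟫ • e 0) + ⟪e 0, x⟫ • e 0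
      abel
    have key0 : ⟪e 0, x - kacz e x 0⟫ = 0 := by
      show ⟪e 0, x - ⟪e 0, x⟫ • e 0⟫ = 0
      rw [inner_sub_right, inner_smul_right, hself 0]
      ring
    have horth : ⟪x - kacz e x 0, ⟪e 0, x⟫ • e 0⟫ = 0 := by
      rw [inner_smul_right, ← inner_conj_symm (x - kacz e x 0) (e 0), key0, map_zero, mul_zero]
    rw [hg0]
    calc ‖x‖ ^ 2 = ‖(x - kacz e x 0) + ⟪e 0, x⟫ • e 0‖ ^ 2 := by rw [← h0]
      _ = ‖x - kacz e x 0‖ ^ 2 + ‖⟪e 0, x⟫ • e 0‖ ^ 2 := by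
          simpa [pow_two] using
            norm_add_sq_eq_norm_sq_add_norm_sq_of_inner_eq_zero _ _ horth
      _ = ‖x - kacz e x 0‖ ^ 2 + ‖⟪e 0, x⟫‖ ^ 2 := by rw [hnorm]
  · rintro n hn
    obtain ⟨m, rfl⟩ := Nat.exists_eq_add_of_le hn
    have hm : 1 + m - 1 = m := by omega
    have hm' : 1 + m = m + 1 := by omega
    rw [hm, hm']
    set c := ⟪e (m+1), x - kacz e x m⟫ with hc
    have hsplit : x - kacz e x m = (x - kacz e x (m+1)) + c • e (m+1) := by
      show x - kacz e x m = (x - (kacz e x m + c • e (m+1))) + c • e (m+1)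
      abel
    have key1 : ⟪e (m+1), x - kacz e x (m+1)⟫ = 0 := by
      show ⟪e (m+1), x - (kacz e x m + c • e (m+1))⟫ = 0
      rw [sub_add_eq_sub_sub, inner_sub_right, inner_smul_right, hself (m+1), ← hc]
      ring
    have horth : ⟪x - kacz e x (m+1), c • e (m+1)⟫ = 0 := by
      rw [inner_smul_right, ← inner_conj_symm (x - kacz e x (m+1)) (e (m+1)), key1, map_zero, mul_zero]
    calc ‖x - kacz e x m‖ ^ 2
        = ‖(x - kacz e x (m+1)) + c • e (m+1)‖ ^ 2 := by rw [← hsplit]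
      _ = ‖x - kacz e x (m+1)‖ ^ 2 + ‖c • e (m+1)‖ ^ 2 := by
          simpa [pow_two] using
            norm_add_sq_eq_norm_sq_add_norm_sq_of_inner_eq_zero _ _ horth
      _ = ‖x - kacz e x (m+1)‖ ^ 2 + ‖⟪g (m+1), x⟫‖ ^ 2 := by
          rw [hnorm, hc, kacz_coef e g hg0 hg x m]
end

section
/- The Bessel inequality for the Kaczmarz auxiliary vectors: ∑_{n=0}^∞ |⟨x, g_n⟩|² ≤ ‖x‖² for all x ∈ H. -/
/-! The vectors `g n` are the coefficients of the Kaczmarz iteration run on `x` from `0`: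
the residual `r n = x - ∑_{i<n} ⟪g i, x⟫ • e i` satisfies `⟪g n, x⟫ = ⟪e n, r n⟫`, so
`r (n + 1) = r n - ⟪e n, r n⟫ • e n` is the projection of `r n` onto `(e n)ᗮ`. Pythagoras gives
`‖r (n + 1)‖² = ‖r n‖² - |⟪g n, x⟫|²`, hence `∑_{k<n} |⟪g k, x⟫|² = ‖x‖² - ‖r n‖² ≤ ‖x‖²`. -/

open Finset
open scoped InnerProductSpace

theorem norm_sub_inner_smul_sq {𝕜 E : Type*} [RCLike 𝕜] [NormedAddCommGroup E]
    [InnerProductSpace 𝕜 E] {u : E} (hu : ‖u‖ = 1) (y : E) :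
    ‖y - ⟪u, y⟫_𝕜 • u‖ ^ 2 = ‖y‖ ^ 2 - ‖⟪u, y⟫_𝕜‖ ^ 2 := by
  have hre : RCLike.re ⟪y, ⟪u, y⟫_𝕜 • u⟫_𝕜 = ‖⟪u, y⟫_𝕜‖ ^ 2 := by
    rw [inner_smul_right, ← inner_conj_symm u y, RCLike.conj_mul, RCLike.norm_conj,
      ← RCLike.ofReal_pow, RCLike.ofReal_re]
  rw [@norm_sub_sq 𝕜, hre, norm_smul, hu, mul_one]
  ring

section Kaczmarz

variable {𝕜 E : Type*} [RCLike 𝕜] [NormedAddCommGroup E] [InnerProductSpace 𝕜 E]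

variable (𝕜) in
noncomputable def kaczmarzResidual (e g : ℕ → E) (x : E) (n : ℕ) : E :=
  x - ∑ i ∈ range n, ⟪g i, x⟫_𝕜 • e i

theorem kaczmarzResidual_zero (e g : ℕ → E) (x : E) :
    kaczmarzResidual 𝕜 e g x 0 = x := by
  simp [kaczmarzResidual]

theorem kaczmarzResidual_succ (e g : ℕ → E) (x : E) (n : ℕ) :
    kaczmarzResidual 𝕜 e g x (n + 1) =
      kaczmarzResidual 𝕜 e g x n - ⟪g n, x⟫_𝕜 • e n := by
  simp only [kaczmarzResidual, sum_range_succ]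
  abel

theorem inner_eq_inner_kaczmarzResidual {e g : ℕ → E}
    (hg : ∀ n, g n = e n - ∑ i ∈ range n, ⟪e i, e n⟫_𝕜 • g i) (x : E) (n : ℕ) :
    ⟪g n, x⟫_𝕜 = ⟪e n, kaczmarzResidual 𝕜 e g x n⟫_𝕜 := by
  rw [hg n, kaczmarzResidual]
  simp only [inner_sub_left, inner_sub_right, sum_inner, inner_sum, inner_smul_left,
    inner_smul_right, inner_conj_symm, mul_comm]

theorem sum_range_norm_inner_sq_eq {e g : ℕ → E} (he : ∀ n, ‖e n‖ = 1)
    (hg : ∀ n, g n = e n - ∑ i ∈ range n, ⟪e i, e n⟫_𝕜 • g i) (x : E) (n : ℕ) :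
    ∑ k ∈ range n, ‖⟪g k, x⟫_𝕜‖ ^ 2 = ‖x‖ ^ 2 - ‖kaczmarzResidual 𝕜 e g x n‖ ^ 2 := by
  induction n with
  | zero => simp [kaczmarzResidual_zero]
  | succ n ih =>
    rw [sum_range_succ, ih, kaczmarzResidual_succ, inner_eq_inner_kaczmarzResidual hg,
      norm_sub_inner_smul_sq (he n)]
    ring

end Kaczmarz

open scoped ComplexInnerProductSpace

theorem kaczmarz_bessel_inequality
    {H : Type*} [NormedAddCommGroup H] [InnerProductSpace ℂ H]
    (e g : ℕ → H) (he : ∀ n, ‖e n‖ = 1)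
    (hg0 : g 0 = e 0)
    (hg : ∀ n, 0 < n → g n = e n - ∑ i ∈ Finset.range n, ⟪e i, e n⟫ • g i) :
    ∀ x : H, Summable (fun n => ‖⟪g n, x⟫‖ ^ 2) ∧
      ∑' n, ‖⟪g n, x⟫‖ ^ 2 ≤ ‖x‖ ^ 2 := by
  intro x
  have hrec : ∀ n, g n = e n - ∑ i ∈ range n, ⟪e i, e n⟫ • g i := fun n =>
    n.eq_zero_or_pos.elim (fun h => by simpa [h] using hg0) (hg n)
  have bound : ∀ n, ∑ k ∈ range n, ‖⟪g k, x⟫‖ ^ 2 ≤ ‖x‖ ^ 2 := fun n => by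
    rw [sum_range_norm_inner_sq_eq he hrec]
    exact sub_le_self _ (sq_nonneg _)
  have hsum : Summable fun n => ‖⟪g n, x⟫‖ ^ 2 :=
    summable_of_sum_range_le (fun n => sq_nonneg _) bound
  exact ⟨hsum, hsum.tsum_le_of_sum_range_le bound⟩
end

section
/- The Kaczmarz iterates satisfy x - x_n = (I - S_n*) x for all x ∈ H, where S_n y = ∑_{j=0}^n ⟨y, e_j⟩ g_j. -/
open scoped ComplexInnerProductSpace

lemma kacz_eq_sum {H : Type*} [NormedAddCommGroup H] [InnerProductSpace ℂ H]
    (e g : ℕ → H)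
    (hg0 : g 0 = e 0)
    (hg : ∀ n, 0 < n → g n = e n - ∑ i ∈ Finset.range n, ⟪e i, e n⟫ • g i)
    (x : H) : ∀ n, kacz e x n = ∑ j ∈ Finset.range (n + 1), ⟪g j, x⟫ • e j := by
  intro n
  induction n with
  | zero => simp [kacz, hg0]
  | succ n ih =>
    rw [Finset.sum_range_succ, ← ih]
    show kacz e x n + ⟪e (n+1), x - kacz e x n⟫ • e (n+1) = _
    congr 2
    rw [ih, hg (n+1) (Nat.succ_pos n), inner_sub_left, inner_sub_right, sum_inner,
      inner_sum]
    congr 1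
    apply Finset.sum_congr rfl
    intro i _
    rw [inner_smul_left, inner_smul_right, inner_conj_symm, mul_comm]

theorem kaczmarz_error_eq_one_sub_adjoint_S
    {H : Type*} [NormedAddCommGroup H] [InnerProductSpace ℂ H] [CompleteSpace H]
    (e g : ℕ → H) (he : ∀ n, ‖e n‖ = 1)
    (hg0 : g 0 = e 0)
    (hg : ∀ n, 0 < n → g n = e n - ∑ i ∈ Finset.range n, ⟪e i, e n⟫ • g i)
    (S : ℕ → H →L[ℂ] H)
    (hS : ∀ (n : ℕ) (y : H), S n y = ∑ j ∈ Finset.range (n + 1), ⟪e j, y⟫ • g j) :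
    ∀ (x : H) (n : ℕ), x - kacz e x n = (1 - ContinuousLinearMap.adjoint (S n)) x := by
  intro x n
  have hadj : ContinuousLinearMap.adjoint (S n) x
      = ∑ j ∈ Finset.range (n + 1), ⟪g j, x⟫ • e j := by
    apply ext_inner_right ℂ
    intro y
    rw [ContinuousLinearMap.adjoint_inner_left, hS, inner_sum, sum_inner]
    apply Finset.sum_congr rfl
    intro j _
    rw [inner_smul_left, inner_smul_right, inner_conj_symm, mul_comm]
  rw [kacz_eq_sum e g hg0 hg x n, ← hadj]
  simp [sub_eq_iff_eq_add]
end

section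
/- For any normalized Bessel sequence {g_n}_{n≥0} in a Hilbert space H there exists a sequence {e_n}_{n≥0} of unit vectors such that g_0 = e_0 and g_n = e_n - ∑_{i=0}^{n-1} ⟨e_n, e_i⟩ g_i for all n ≥ 1. -/
/-!
Write `Tᵥ x = x - ⟪v, x⟫ v`, `Rₙ = T_{eₙ₋₁} ⋯ T_{e₀}` and `Sₙ = T_{e₀} ⋯ T_{eₙ₋₁} = Rₙ*`.
The required relation says exactly `gₙ = Sₙ eₙ`, and for unit vectors `eᵢ` it gives
`‖Rₙ x‖² = ‖x‖² - ∑_{i<n} |⟪gᵢ, x⟫|²`. So the `eₙ` can be chosen recursively: once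
`e₀, …, eₙ₋₁` are found, Bessel's inequality reads `|⟪gₙ, x⟫| ≤ ‖Sₙ* x‖`. On the
finite-dimensional space spanned by the `eᵢ` and `gᵢ`, which `Sₙ` and `Rₙ` leave invariant,
Douglas' lemma then writes `gₙ = Sₙ h` with `h ⊥ ker Sₙ` and `‖h‖ ≤ 1`. As `Rₙ e₀ = 0`, the
operator `Sₙ` has a nontrivial kernel there as well, and adding a kernel vector to `h` makes
it a unit vector `eₙ` with `Sₙ eₙ = gₙ`.
-/

open scoped InnerProductSpace

section

variable {𝕜 E : Type*} [RCLike 𝕜] [NormedAddCommGroup E] [InnerProductSpace 𝕜 E]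

theorem exists_norm_add_smul_eq_one {h w : E} (hhw : ⟪h, w⟫_𝕜 = 0) (hh : ‖h‖ ≤ 1) (hw : w ≠ 0) :
    ∃ c : 𝕜, ‖h + c • w‖ = 1 := by
  have hh2 : 0 ≤ 1 - ‖h‖ ^ 2 := by nlinarith [norm_nonneg h]
  set c : ℝ := √(1 - ‖h‖ ^ 2) / ‖w‖
  have hcw : ‖(c : 𝕜) • w‖ = √(1 - ‖h‖ ^ 2) := by
    rw [norm_smul, RCLike.norm_ofReal, abs_of_nonneg (by positivity),
      div_mul_cancel₀ _ (norm_ne_zero_iff.mpr hw)]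
  have hpyth := norm_add_sq_eq_norm_sq_add_norm_sq_of_inner_eq_zero h ((c : 𝕜) • w)
    (by rw [inner_smul_right, hhw, mul_zero])
  rw [hcw, Real.mul_self_sqrt hh2] at hpyth
  exact ⟨c, (mul_self_inj (norm_nonneg _) zero_le_one).mp (by rw [hpyth]; ring)⟩

section FiniteDimensional

variable [FiniteDimensional 𝕜 E]

/-- A finite-dimensional form of Douglas' factorization lemma. -/
theorem LinearMap.exists_apply_eq_of_norm_inner_le {F : Type*} [NormedAddCommGroup F]
    [InnerProductSpace 𝕜 F] [FiniteDimensional 𝕜 F] (A : E →ₗ[𝕜] F) {y : F}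
    (hy : ∀ x, ‖⟪y, x⟫_𝕜‖ ≤ ‖A.adjoint x‖) :
    ∃ h ∈ (LinearMap.ker A)ᗮ, A h = y ∧ ‖h‖ ≤ 1 := by
  have hy_range : y ∈ LinearMap.range A := by
    rw [← Submodule.orthogonal_orthogonal (LinearMap.range A), A.orthogonal_range,
      Submodule.mem_orthogonal']
    intro x hx
    simpa [LinearMap.mem_ker.mp hx] using hy x
  rw [← A.range_self_comp_adjoint] at hy_range
  obtain ⟨z, rfl⟩ := hy_range
  refine ⟨A.adjoint z, A.orthogonal_ker ▸ LinearMap.mem_range_self _ z, rfl, ?_⟩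
  have hsq : ‖A.adjoint z‖ ^ 2 ≤ ‖A.adjoint z‖ := by
    calc ‖A.adjoint z‖ ^ 2 = ‖⟪A (A.adjoint z), z⟫_𝕜‖ := by
          rw [← LinearMap.adjoint_inner_right, inner_self_eq_norm_sq_to_K]; simp
      _ ≤ ‖A.adjoint z‖ := hy z
  nlinarith [norm_nonneg (A.adjoint z)]

theorem LinearMap.ker_ne_bot_of_ker_adjoint_ne_bot {A : E →ₗ[𝕜] E}
    (h : LinearMap.ker A.adjoint ≠ ⊥) : LinearMap.ker A ≠ ⊥ := by
  contrapose! h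
  rw [← A.orthogonal_range, LinearMap.range_eq_top.mpr
    (LinearMap.injective_iff_surjective.mp (LinearMap.ker_eq_bot.mp h)),
    Submodule.top_orthogonal_eq_bot]

theorem LinearMap.exists_norm_eq_one_apply_eq (A : E →ₗ[𝕜] E)
    (hker : LinearMap.ker A.adjoint ≠ ⊥) {y : E} (hy : ∀ x, ‖⟪y, x⟫_𝕜‖ ≤ ‖A.adjoint x‖) :
    ∃ v, ‖v‖ = 1 ∧ A v = y := by
  obtain ⟨h, hh_perp, rfl, hh⟩ := A.exists_apply_eq_of_norm_inner_le hy
  obtain ⟨w, hw, hw0⟩ :=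
    Submodule.exists_mem_ne_zero_of_ne_bot (A.ker_ne_bot_of_ker_adjoint_ne_bot hker)
  obtain ⟨c, hc⟩ := exists_norm_add_smul_eq_one (𝕜 := 𝕜)
    (Submodule.inner_left_of_mem_orthogonal hw hh_perp) hh hw0
  exact ⟨h + c • w, hc, by rw [map_add, map_smul, LinearMap.mem_ker.mp hw, smul_zero, add_zero]⟩

end FiniteDimensional

theorem exists_norm_eq_one_apply_eq_of_invariant {A B : E →ₗ[𝕜] E}
    (hAB : ∀ x y, ⟪A x, y⟫_𝕜 = ⟪x, B y⟫_𝕜) {V : Submodule 𝕜 E} [FiniteDimensional 𝕜 V]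
    (hA : ∀ x ∈ V, A x ∈ V) (hB : ∀ x ∈ V, B x ∈ V) {z : E} (hzV : z ∈ V) (hz : z ≠ 0)
    (hBz : B z = 0) {y : E} (hyV : y ∈ V) (hy : ∀ x ∈ V, ‖⟪y, x⟫_𝕜‖ ≤ ‖B x‖) :
    ∃ v, ‖v‖ = 1 ∧ A v = y := by
  set A' := A.restrict hA
  have hadj : A'.adjoint = B.restrict hB := by
    rw [((LinearMap.eq_adjoint_iff A' (B.restrict hB)).mpr fun x y => hAB x y),
      LinearMap.adjoint_adjoint]
  have hker : LinearMap.ker A'.adjoint ≠ ⊥ := by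
    rw [hadj, Submodule.ne_bot_iff]
    exact ⟨⟨z, hzV⟩, Subtype.ext hBz, fun h => hz (congrArg Subtype.val h)⟩
  obtain ⟨v, hv, hAv⟩ := A'.exists_norm_eq_one_apply_eq hker (y := ⟨y, hyV⟩)
    fun x => hadj ▸ hy x x.2
  exact ⟨v, hv, congrArg Subtype.val hAv⟩

end

namespace Kaczmarz

variable {𝕜 E : Type*} [RCLike 𝕜] [NormedAddCommGroup E] [InnerProductSpace 𝕜 E]

variable (𝕜) in
def step (v : E) : E →ₗ[𝕜] E := LinearMap.id - (innerₛₗ 𝕜 v).smulRight v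

theorem step_apply (v x : E) : step 𝕜 v x = x - ⟪v, x⟫_𝕜 • v := rfl

theorem inner_step_left (v x y : E) : ⟪step 𝕜 v x, y⟫_𝕜 = ⟪x, step 𝕜 v y⟫_𝕜 := by
  simp only [step_apply, inner_sub_left, inner_sub_right, inner_smul_left, inner_smul_right,
    inner_conj_symm]
  ring

theorem step_self {v : E} (hv : ‖v‖ = 1) : step 𝕜 v v = 0 := by
  simp [step_apply, inner_self_eq_norm_sq_to_K, hv]

theorem norm_step_sq {v : E} (hv : ‖v‖ = 1) (x : E) :
    ‖step 𝕜 v x‖ ^ 2 = ‖x‖ ^ 2 - ‖⟪v, x⟫_𝕜‖ ^ 2 := by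
  have hperp : ⟪step 𝕜 v x, ⟪v, x⟫_𝕜 • v⟫_𝕜 = 0 := by
    rw [inner_step_left, map_smul, step_self hv, smul_zero, inner_zero_right]
  have hpyth := norm_add_sq_eq_norm_sq_add_norm_sq_of_inner_eq_zero _ _ hperp
  rw [step_apply, sub_add_cancel, norm_smul, hv, mul_one] at hpyth
  rw [step_apply]
  linarith

variable (𝕜) in
/-- `residual 𝕜 e n x` is the error `x - xₙ` of the `n`-th Kaczmarz approximation of `x` along
`e` (`x₀ = 0`, `xₙ₊₁ = xₙ + ⟪eₙ, x - xₙ⟫ eₙ`); then `xₙ = ∑_{i<n} ⟪dual 𝕜 e i, x⟫ • e i`. -/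
def residual (e : ℕ → E) : ℕ → E →ₗ[𝕜] E
  | 0 => LinearMap.id
  | n + 1 => step 𝕜 (e n) ∘ₗ residual e n

variable (𝕜) in
def residualAdjoint (e : ℕ → E) : ℕ → E →ₗ[𝕜] E
  | 0 => LinearMap.id
  | n + 1 => residualAdjoint e n ∘ₗ step 𝕜 (e n)

variable (𝕜) in
def dual (e : ℕ → E) (n : ℕ) : E := residualAdjoint 𝕜 e n (e n)

variable {e : ℕ → E} {n : ℕ}

theorem residual_succ_apply (x : E) :
    residual 𝕜 e (n + 1) x = step 𝕜 (e n) (residual 𝕜 e n x) := rfl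

theorem residualAdjoint_succ_apply (x : E) :
    residualAdjoint 𝕜 e (n + 1) x = residualAdjoint 𝕜 e n (step 𝕜 (e n) x) := rfl

theorem inner_residualAdjoint_left (x y : E) :
    ⟪residualAdjoint 𝕜 e n x, y⟫_𝕜 = ⟪x, residual 𝕜 e n y⟫_𝕜 := by
  induction n generalizing x with
  | zero => rfl
  | succ n ih => rw [residualAdjoint_succ_apply, residual_succ_apply, ih, inner_step_left]

theorem inner_dual_left (x : E) : ⟪dual 𝕜 e n, x⟫_𝕜 = ⟪e n, residual 𝕜 e n x⟫_𝕜 :=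
  inner_residualAdjoint_left _ _

theorem residualAdjoint_apply (x : E) :
    residualAdjoint 𝕜 e n x = x - ∑ i ∈ Finset.range n, ⟪e i, x⟫_𝕜 • dual 𝕜 e i := by
  induction n with
  | zero => simp [residualAdjoint]
  | succ n ih =>
    rw [residualAdjoint_succ_apply, step_apply, map_sub, map_smul, ih, Finset.sum_range_succ, dual]
    abel

theorem norm_residual_sq (he : ∀ i < n, ‖e i‖ = 1) (x : E) :
    ‖residual 𝕜 e n x‖ ^ 2 = ‖x‖ ^ 2 - ∑ i ∈ Finset.range n, ‖⟪dual 𝕜 e i, x⟫_𝕜‖ ^ 2 := by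
  induction n with
  | zero => simp [residual]
  | succ n ih =>
    rw [residual_succ_apply, norm_step_sq (he n n.lt_succ_self),
      ih fun i hi => he i (hi.trans n.lt_succ_self), Finset.sum_range_succ, inner_dual_left]
    ring

theorem residual_apply_first (he : ‖e 0‖ = 1) (hn : 0 < n) : residual 𝕜 e n (e 0) = 0 := by
  induction n with
  | zero => exact absurd hn (lt_irrefl 0)
  | succ n ih =>
    rcases n.eq_zero_or_pos with rfl | hn
    · exact step_self he
    · rw [residual_succ_apply, ih hn, map_zero]

theorem residual_mem {V : Submodule 𝕜 E} (he : ∀ i < n, e i ∈ V) {x : E} (hx : x ∈ V) :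
    residual 𝕜 e n x ∈ V := by
  induction n with
  | zero => exact hx
  | succ n ih =>
    rw [residual_succ_apply, step_apply]
    exact V.sub_mem (ih fun i hi => he i (hi.trans n.lt_succ_self))
      (V.smul_mem _ (he n n.lt_succ_self))

theorem residualAdjoint_mem {V : Submodule 𝕜 E} (he : ∀ i < n, dual 𝕜 e i ∈ V) {x : E}
    (hx : x ∈ V) :
    residualAdjoint 𝕜 e n x ∈ V := by
  rw [residualAdjoint_apply]
  exact V.sub_mem hx (V.sum_mem fun i hi => V.smul_mem _ (he i (Finset.mem_range.mp hi)))

theorem residualAdjoint_congr {e' : ℕ → E} (h : ∀ i < n, e i = e' i) :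
    residualAdjoint 𝕜 e n = residualAdjoint 𝕜 e' n := by
  induction n with
  | zero => rfl
  | succ n ih =>
    simp only [residualAdjoint, ih fun i hi => h i (hi.trans n.lt_succ_self), h n n.lt_succ_self]

theorem exists_norm_eq_one_residualAdjoint_eq (hn : 0 < n) (he : ∀ i < n, ‖e i‖ = 1) {y : E}
    (hy : ∀ x, ‖⟪y, x⟫_𝕜‖ ≤ ‖residual 𝕜 e n x‖) :
    ∃ v, ‖v‖ = 1 ∧ residualAdjoint 𝕜 e n v = y := by
  set V := Submodule.span 𝕜 (insert y (e '' Set.Iio n ∪ dual 𝕜 e '' Set.Iio n))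
  have : FiniteDimensional 𝕜 V := FiniteDimensional.span_of_finite 𝕜
    ((((Set.finite_Iio n).image _).union ((Set.finite_Iio n).image _)).insert y)
  have heV : ∀ i < n, e i ∈ V := fun i hi =>
    Submodule.subset_span (Or.inr (Or.inl ⟨i, hi, rfl⟩))
  have hdV : ∀ i < n, dual 𝕜 e i ∈ V := fun i hi =>
    Submodule.subset_span (Or.inr (Or.inr ⟨i, hi, rfl⟩))
  exact exists_norm_eq_one_apply_eq_of_invariant inner_residualAdjoint_left
    (fun x hx => residualAdjoint_mem hdV hx) (fun x hx => residual_mem heV hx) (heV 0 hn)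
    (norm_ne_zero_iff.mp ((he 0 hn).trans_ne one_ne_zero)) (residual_apply_first (he 0 hn) hn)
    (Submodule.subset_span (Set.mem_insert y _)) fun x _ => hy x

theorem norm_inner_le_norm_residual {g : ℕ → E}
    (hbessel : ∀ x : E, ∀ s : Finset ℕ, ∑ n ∈ s, ‖⟪g n, x⟫_𝕜‖ ^ 2 ≤ ‖x‖ ^ 2)
    (he : ∀ i < n, ‖e i‖ = 1) (hdual : ∀ i < n, dual 𝕜 e i = g i) (x : E) :
    ‖⟪g n, x⟫_𝕜‖ ≤ ‖residual 𝕜 e n x‖ := by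
  have hsum := hbessel x (Finset.range (n + 1))
  rw [Finset.sum_range_succ] at hsum
  have hsq : ‖⟪g n, x⟫_𝕜‖ ^ 2 ≤ ‖residual 𝕜 e n x‖ ^ 2 := by
    rw [norm_residual_sq he,
      Finset.sum_congr rfl fun i hi => by rw [hdual i (Finset.mem_range.mp hi)]]
    linarith
  exact (pow_le_pow_iff_left₀ (norm_nonneg _) (norm_nonneg _) two_ne_zero).mp hsq

variable (𝕜) in
/-- The argument of `residualAdjoint` is cut off at `n` to make the recursion well founded;
`residualAdjoint 𝕜 e n` only reads `e i` for `i < n`. -/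
noncomputable def ofDual (g : ℕ → E) (n : ℕ) : E :=
  Classical.epsilon fun v : E => ‖v‖ = 1 ∧
    residualAdjoint 𝕜 (fun i => if i < n then ofDual g i else 0) n v = g n
termination_by n

theorem ofDual_spec {g : ℕ → E}
    (hbessel : ∀ x : E, ∀ s : Finset ℕ, ∑ n ∈ s, ‖⟪g n, x⟫_𝕜‖ ^ 2 ≤ ‖x‖ ^ 2)
    (hnorm : ‖g 0‖ = 1) (n : ℕ) : ‖ofDual 𝕜 g n‖ = 1 ∧ dual 𝕜 (ofDual 𝕜 g) n = g n := by
  induction n using Nat.strong_induction_on with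
  | _ n ih =>
  have hex : ∃ v : E, ‖v‖ = 1 ∧ residualAdjoint 𝕜 (ofDual 𝕜 g) n v = g n := by
    rcases n.eq_zero_or_pos with rfl | hn
    · exact ⟨g 0, hnorm, rfl⟩
    · have he : ∀ i < n, ‖ofDual 𝕜 g i‖ = 1 := fun i hi => (ih i hi).1
      exact exists_norm_eq_one_residualAdjoint_eq hn he
        (norm_inner_le_norm_residual hbessel he fun i hi => (ih i hi).2)
  have htrunc : residualAdjoint 𝕜 (fun i => if i < n then ofDual 𝕜 g i else 0) n =
      residualAdjoint 𝕜 (ofDual 𝕜 g) n :=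
    residualAdjoint_congr fun i hi => if_pos hi
  rw [← htrunc] at hex
  rw [dual, ← htrunc, ofDual]
  exact Classical.epsilon_spec hex

end Kaczmarz

open scoped ComplexInnerProductSpace

theorem normalized_bessel_from_kaczmarz_general
    {H : Type*} [NormedAddCommGroup H] [InnerProductSpace ℂ H]
    (g : ℕ → H)
    (hbessel : ∀ x : H, ∀ s : Finset ℕ, ∑ n ∈ s, ‖⟪g n, x⟫‖ ^ 2 ≤ ‖x‖ ^ 2)
    (hnorm : ‖g 0‖ = 1) :
    ∃ e : ℕ → H, (∀ n, ‖e n‖ = 1) ∧ g 0 = e 0 ∧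
      ∀ n, 0 < n → g n = e n - ∑ i ∈ Finset.range n, ⟪e i, e n⟫ • g i := by
  have hspec := Kaczmarz.ofDual_spec hbessel hnorm
  refine ⟨Kaczmarz.ofDual ℂ g, fun n => (hspec n).1, (hspec 0).2.symm, fun n _ => ?_⟩
  rw [← (hspec n).2, Kaczmarz.dual, Kaczmarz.residualAdjoint_apply]
  exact congrArg _ (Finset.sum_congr rfl fun i _ => by rw [(hspec i).2])

theorem normalized_bessel_from_kaczmarz
    {H : Type*} [NormedAddCommGroup H] [InnerProductSpace ℂ H] [CompleteSpace H]
    (g : ℕ → H)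
    (hbessel : ∀ x : H, ∀ s : Finset ℕ, ∑ n ∈ s, ‖⟪g n, x⟫‖ ^ 2 ≤ ‖x‖ ^ 2)
    (hnorm : ‖g 0‖ = 1) :
    ∃ e : ℕ → H, (∀ n, ‖e n‖ = 1) ∧ g 0 = e 0 ∧
      ∀ n, 0 < n → g n = e n - ∑ i ∈ Finset.range n, ⟪e i, e n⟫ • g i :=
  normalized_bessel_from_kaczmarz_general g hbessel hnorm
end

section
/- Every normalized tight frame {g_n}_{n≥0} in a Hilbert space H arises from the Kaczmarz algorithm: there exists an effective sequence {e_n}_{n≥0} of unit vectors with g_0 = e_0 and g_n = e_n - ∑_{i=0}^{n-1} ⟨e_n, e_i⟩ g_i. -/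
open scoped ComplexInnerProductSpace

namespace KaczFrame

variable {H : Type*} [NormedAddCommGroup H] [InnerProductSpace ℂ H]

/-- The prefix invariant. -/
def Pfx (g e : ℕ → H) (n : ℕ) : Prop :=
  (∀ k, k ≤ n → ‖e k‖ = 1) ∧ e 0 = g 0 ∧
    ∀ k, 0 < k → k ≤ n → g k = e k - ∑ i ∈ Finset.range k, ⟪e i, e k⟫ • g i

lemma Pfx.mono {g e : ℕ → H} {m n : ℕ} (h : Pfx g e n) (hmn : m ≤ n) : Pfx g e m :=
  ⟨fun k hk => h.1 k (hk.trans hmn), h.2.1, fun k h1 h2 => h.2.2 k h1 (h2.trans hmn)⟩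

lemma inner_expand (e g : ℕ → H) (m : ℕ) (w x : H) :
    ⟪w, x - ∑ i ∈ Finset.range m, ⟪g i, x⟫ • e i⟫
      = ⟪w - ∑ i ∈ Finset.range m, ⟪e i, w⟫ • g i, x⟫ := by
  simp only [inner_sub_left, inner_sub_right, inner_sum, sum_inner, inner_smul_left,
    inner_smul_right, inner_conj_symm]
  congr 1
  exact Finset.sum_congr rfl fun i _ => mul_comm _ _

lemma kacz_sum {g e : ℕ → H} : ∀ {n : ℕ}, Pfx g e n → ∀ x : H,
    kacz e x n = ∑ i ∈ Finset.range (n+1), ⟪g i, x⟫ • e i := by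
  intro n
  induction n with
  | zero =>
    intro h x
    simp [kacz, h.2.1]
  | succ n ih =>
    intro h x
    have hn := h.mono (Nat.le_succ n)
    have hc : ⟪e (n+1), x - kacz e x n⟫ = ⟪g (n+1), x⟫ := by
      rw [ih hn x, inner_expand, ← h.2.2 (n+1) n.succ_pos le_rfl]
    show kacz e x n + ⟪e (n+1), x - kacz e x n⟫ • e (n+1) = _
    rw [Finset.sum_range_succ, ← ih hn x, hc]

lemma inner_kacz_coeff {g e : ℕ → H} {n : ℕ} (h : Pfx g e (n+1)) (x : H) :
    ⟪e (n+1), x - kacz e x n⟫ = ⟪g (n+1), x⟫ := by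
  rw [kacz_sum (h.mono (Nat.le_succ n)) x, inner_expand,
    ← h.2.2 (n+1) n.succ_pos le_rfl]

lemma norm_sub_proj_sq (v y : H) (hv : ‖v‖ = 1) :
    ‖y - ⟪v, y⟫ • v‖ ^ 2 = ‖y‖ ^ 2 - ‖⟪v, y⟫‖ ^ 2 := by
  have h1 : ⟪y, (⟪v, y⟫ : ℂ) • v⟫ = ((‖⟪v, y⟫‖ ^ 2 : ℝ) : ℂ) := by
    rw [inner_smul_right, ← inner_conj_symm y v, RCLike.mul_conj]
    norm_cast
  have h2 : ‖(⟪v, y⟫ : ℂ) • v‖ = ‖⟪v, y⟫‖ := by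
    rw [norm_smul, hv, mul_one]
  rw [norm_sub_sq (𝕜 := ℂ), h1, h2]
  rw [RCLike.re_to_complex, Complex.ofReal_re]
  ring

lemma normsq {g e : ℕ → H} : ∀ {n : ℕ}, Pfx g e n → ∀ x : H,
    ‖x - kacz e x n‖ ^ 2 = ‖x‖ ^ 2 - ∑ i ∈ Finset.range (n+1), ‖⟪g i, x⟫‖ ^ 2 := by
  intro n
  induction n with
  | zero =>
    intro h x
    have h0 : ‖g 0‖ = 1 := h.2.1 ▸ h.1 0 (le_refl 0)
    show ‖x - ⟪e 0, x⟫ • e 0‖ ^ 2 = _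
    rw [h.2.1, norm_sub_proj_sq _ _ h0, Finset.sum_range_one]
  | succ n ih =>
    intro h x
    have hn := h.mono (Nat.le_succ n)
    have step : x - kacz e x (n+1)
        = (x - kacz e x n) - ⟪e (n+1), x - kacz e x n⟫ • e (n+1) := by
      show x - (kacz e x n + _ • e (n+1)) = _
      abel
    rw [step, norm_sub_proj_sq _ _ (h.1 (n+1) le_rfl), ih hn x, inner_kacz_coeff h x,
      Finset.sum_range_succ (fun i => ‖(⟪g i, x⟫ : ℂ)‖ ^ 2) (n+1)]
    ring

lemma inner_kacz_self (e : ℕ → H) (n : ℕ) (hen : ‖e n‖ = 1) (x : H) :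
    ⟪e n, x - kacz e x n⟫ = 0 := by
  have h1 : (⟪e n, e n⟫ : ℂ) = 1 := by
    rw [inner_self_eq_norm_sq_to_K, hen]; norm_num
  cases n with
  | zero =>
    show ⟪e 0, x - ⟪e 0, x⟫ • e 0⟫ = 0
    rw [inner_sub_right, inner_smul_right, h1]; ring
  | succ n =>
    show ⟪e (n+1), x - (kacz e x n + ⟪e (n+1), x - kacz e x n⟫ • e (n+1))⟫ = 0
    simp only [inner_sub_right, inner_add_right, inner_smul_right, h1]
    ring

/-- The Kaczmarz partial operator as a continuous linear map. -/
noncomputable def Kop (e : ℕ → H) : ℕ → H →L[ℂ] H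
  | 0 => (innerSL ℂ (e 0)).smulRight (e 0)
  | (n+1) => Kop e n
      + ((innerSL ℂ (e (n+1))).comp (ContinuousLinearMap.id ℂ H - Kop e n)).smulRight (e (n+1))

lemma Kop_apply (e : ℕ → H) (x : H) : ∀ n, Kop e n x = kacz e x n
  | 0 => by simp [Kop, kacz]
  | (n+1) => by
    simp [Kop, kacz, Kop_apply e x n, inner_sub_right]

lemma exists_repr [CompleteSpace H] (T : H →L[ℂ] H) (w : H)
    (hb : ∀ x : H, ‖⟪w, x⟫‖ ≤ ‖T x‖) :
    ∃ u : H, ‖u‖ ≤ 1 ∧ ∀ x : H, ⟪u, T x⟫ = ⟪w, x⟫ := by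
  classical
  have hker : LinearMap.ker ((T : H →ₗ[ℂ] H))
      ≤ LinearMap.ker (((innerSL ℂ w) : H →L[ℂ] ℂ) : H →ₗ[ℂ] ℂ) := by
    intro x hx
    have hx' : T x = 0 := hx
    have hbx := hb x
    rw [hx', norm_zero] at hbx
    have : ‖⟪w, x⟫‖ = 0 := le_antisymm hbx (norm_nonneg _)
    simpa [LinearMap.mem_ker] using norm_eq_zero.mp this
  let f₁ := Submodule.liftQ (LinearMap.ker ((T : H →ₗ[ℂ] H)))
      (((innerSL ℂ w) : H →L[ℂ] ℂ) : H →ₗ[ℂ] ℂ) hker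
  let f₀ : LinearMap.range ((T : H →ₗ[ℂ] H)) →ₗ[ℂ] ℂ :=
    f₁.comp (LinearMap.quotKerEquivRange ((T : H →ₗ[ℂ] H))).symm.toLinearMap
  have hf₀ : ∀ (x : H) (hx : (T : H →ₗ[ℂ] H) x ∈ LinearMap.range ((T : H →ₗ[ℂ] H))),
      f₀ ⟨(T : H →ₗ[ℂ] H) x, hx⟩ = ⟪w, x⟫ := by
    intro x hx
    show f₁ ((LinearMap.quotKerEquivRange ((T : H →ₗ[ℂ] H))).symm.toLinearMap
      ⟨(T : H →ₗ[ℂ] H) x, hx⟩) = ⟪w, x⟫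
    rw [LinearEquiv.coe_toLinearMap, LinearMap.quotKerEquivRange_symm_apply_image]
    simp [f₁, Submodule.mkQ_apply]
  have hfb : ∀ s : LinearMap.range ((T : H →ₗ[ℂ] H)), ‖f₀ s‖ ≤ 1 * ‖s‖ := by
    rintro ⟨s, hs⟩
    obtain ⟨x, rfl⟩ := hs
    rw [hf₀ x (LinearMap.mem_range_self _ x), one_mul]
    exact hb x
  obtain ⟨F, hFext, hFnorm⟩ :=
    exists_extension_norm_eq (LinearMap.range ((T : H →ₗ[ℂ] H))) (f₀.mkContinuous 1 hfb)
  have hFle : ‖F‖ ≤ 1 := by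
    rw [hFnorm]; exact LinearMap.mkContinuous_norm_le f₀ zero_le_one hfb
  refine ⟨(InnerProductSpace.toDual ℂ H).symm F, ?_, ?_⟩
  · have : ‖(InnerProductSpace.toDual ℂ H).symm F‖ = ‖F‖ :=
      LinearIsometryEquiv.norm_map _ F
    rw [this]; exact hFle
  · intro x
    rw [InnerProductSpace.toDual_symm_apply]
    have h6 : F (T x) = (f₀.mkContinuous 1 hfb) ⟨(T : H →ₗ[ℂ] H) x, LinearMap.mem_range_self _ x⟩ :=
      hFext ⟨(T : H →ₗ[ℂ] H) x, LinearMap.mem_range_self _ x⟩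
    rw [h6, LinearMap.mkContinuous_apply, hf₀ x (LinearMap.mem_range_self _ x)]

lemma exists_next [CompleteSpace H] {g : ℕ → H}
    (hframe : ∀ x : H, HasSum (fun m => ‖⟪g m, x⟫‖ ^ 2) (‖x‖ ^ 2))
    {e : ℕ → H} {n : ℕ} (h : Pfx g e n) :
    ∃ v : H, ‖v‖ = 1 ∧ g (n+1) = v - ∑ i ∈ Finset.range (n+1), ⟪e i, v⟫ • g i := by
  classical
  have hen : ‖e n‖ = 1 := h.1 n le_rfl
  have h1en : (⟪e n, e n⟫ : ℂ) = 1 := by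
    rw [inner_self_eq_norm_sq_to_K, hen]; norm_num
  set T : H →L[ℂ] H := ContinuousLinearMap.id ℂ H - Kop e n with hTdef
  have hTx : ∀ x : H, T x = x - kacz e x n := by
    intro x; simp [hTdef, Kop_apply]
  have hbound : ∀ x : H, ‖⟪g (n+1), x⟫‖ ≤ ‖T x‖ := by
    intro x
    have h1 : ‖T x‖ ^ 2 = ‖x‖ ^ 2 - ∑ i ∈ Finset.range (n+1), ‖⟪g i, x⟫‖ ^ 2 := by
      rw [hTx]; exact normsq h x
    have h2 : ∑ i ∈ Finset.range (n+2), ‖⟪g i, x⟫‖ ^ 2 ≤ ‖x‖ ^ 2 :=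
      sum_le_hasSum _ (fun i _ => by positivity) (hframe x)
    rw [Finset.sum_range_succ] at h2
    have h3 : ‖⟪g (n+1), x⟫‖ ^ 2 ≤ ‖T x‖ ^ 2 := by rw [h1]; linarith
    exact le_of_pow_le_pow_left₀ two_ne_zero (norm_nonneg _) h3
  obtain ⟨u, hunorm, huT⟩ := exists_repr T (g (n+1)) hbound
  have horth : ∀ x : H, ⟪e n, T x⟫ = 0 := by
    intro x; rw [hTx]; exact inner_kacz_self e n hen x
  set u' := u - ⟪e n, u⟫ • e n with hu'def
  have hen_u' : (⟪e n, u'⟫ : ℂ) = 0 := by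
    rw [hu'def, inner_sub_right, inner_smul_right, h1en, mul_one, sub_self]
  have hu'_en : (⟪u', e n⟫ : ℂ) = 0 := by
    rw [← inner_conj_symm u' (e n), hen_u', map_zero]
  have hu'T : ∀ x : H, ⟪u', T x⟫ = ⟪g (n+1), x⟫ := by
    intro x
    rw [hu'def, inner_sub_left, inner_smul_left, horth x, mul_zero, sub_zero, huT x]
  have hu'sq : ‖u'‖ ^ 2 ≤ 1 := by
    have hps := norm_sub_proj_sq (e n) u hen
    rw [hu'def, hps]
    nlinarith [norm_nonneg u, sq_nonneg ‖(⟪e n, u⟫ : ℂ)‖]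
  set t := Real.sqrt (1 - ‖u'‖ ^ 2) with htdef
  have ht0 : 0 ≤ t := Real.sqrt_nonneg _
  have ht2 : t ^ 2 = 1 - ‖u'‖ ^ 2 := Real.sq_sqrt (by linarith)
  set v := u' + (t : ℂ) • e n with hvdef
  have hperp2 : (⟪u', (t : ℂ) • e n⟫ : ℂ) = 0 := by
    rw [inner_smul_right, hu'_en, mul_zero]
  have h7 : ‖(t : ℂ) • e n‖ = t := by
    rw [norm_smul, hen, mul_one, Complex.norm_real]
    exact Real.norm_of_nonneg ht0
  have hvnormsq : ‖v‖ ^ 2 = 1 := by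
    have hpyth := norm_add_sq (𝕜 := ℂ) u' ((t : ℂ) • e n)
    rw [hperp2] at hpyth
    simp only [map_zero, mul_zero, add_zero] at hpyth
    rw [hvdef, hpyth, h7, ht2]
    ring
  have hvnorm : ‖v‖ = 1 := by
    calc ‖v‖ = Real.sqrt (‖v‖ ^ 2) := (Real.sqrt_sq (norm_nonneg v)).symm
    _ = 1 := by rw [hvnormsq, Real.sqrt_one]
  have hvT : ∀ x : H, ⟪v, T x⟫ = ⟪g (n+1), x⟫ := by
    intro x
    rw [hvdef, inner_add_left, inner_smul_left, horth x, mul_zero, add_zero, hu'T x]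
  refine ⟨v, hvnorm, ?_⟩
  have key : ∀ x : H, ⟪g (n+1) - (v - ∑ i ∈ Finset.range (n+1), ⟪e i, v⟫ • g i), x⟫ = 0 := by
    intro x
    have h1 := hvT x
    rw [hTx, kacz_sum h, inner_expand] at h1
    rw [inner_sub_left, h1, sub_self]
  have hzero : g (n+1) - (v - ∑ i ∈ Finset.range (n+1), ⟪e i, v⟫ • g i) = 0 :=
    inner_self_eq_zero.mp (key _)
  exact sub_eq_zero.mp hzero

/-- Recursive construction of the effective sequence, with invariant. -/
noncomputable def seqAux [CompleteSpace H] (g : ℕ → H)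
    (hframe : ∀ x : H, HasSum (fun m => ‖⟪g m, x⟫‖ ^ 2) (‖x‖ ^ 2))
    (hnorm : ‖g 0‖ = 1) : ∀ n : ℕ, {f : ℕ → H // Pfx g f n}
  | 0 => ⟨fun _ => g 0, by
      refine ⟨?_, rfl, ?_⟩
      · intro k hk
        exact hnorm
      · intro k hk hk'; omega⟩
  | (n+1) =>
    ⟨Function.update (seqAux g hframe hnorm n).1 (n+1)
      (Classical.choose (exists_next hframe (seqAux g hframe hnorm n).2)), by
      obtain ⟨hv1, hv2⟩ := Classical.choose_spec (exists_next hframe (seqAux g hframe hnorm n).2)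
      have hprev := (seqAux g hframe hnorm n).2
      refine ⟨?_, ?_, ?_⟩
      · intro k hk
        rcases eq_or_lt_of_le hk with heq | hlt
        · rw [heq, Function.update_self]; exact hv1
        · rw [Function.update_of_ne (by omega)]
          exact hprev.1 k (Nat.lt_succ_iff.mp hlt)
      · rw [Function.update_of_ne (by omega)]
        exact hprev.2.1
      · intro k hk hk'
        rcases eq_or_lt_of_le hk' with heq | hlt
        · subst heq
          rw [Function.update_self,
            Finset.sum_congr rfl (fun i hi => by
              rw [Function.update_of_ne
                (by have := Finset.mem_range.mp hi; omega : i ≠ n+1)])]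
          exact hv2
        · have hk2 : k ≤ n := Nat.lt_succ_iff.mp hlt
          rw [Function.update_of_ne (by omega : k ≠ n+1),
            Finset.sum_congr rfl (fun i hi => by
              rw [Function.update_of_ne
                (by have := Finset.mem_range.mp hi; omega : i ≠ n+1)])]
          exact hprev.2.2 k hk hk2⟩

end KaczFrame

open KaczFrame in
theorem tight_frame_from_effective_kaczmarz
    {H : Type*} [NormedAddCommGroup H] [InnerProductSpace ℂ H] [CompleteSpace H]
    (g : ℕ → H)
    (hframe : ∀ x : H, HasSum (fun n => ‖⟪g n, x⟫‖ ^ 2) (‖x‖ ^ 2))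
    (hnorm : ‖g 0‖ = 1) :
    ∃ e : ℕ → H, (∀ n, ‖e n‖ = 1) ∧ g 0 = e 0 ∧
      (∀ n, 0 < n → g n = e n - ∑ i ∈ Finset.range n, ⟪e i, e n⟫ • g i) ∧
      ∀ x : H, Filter.Tendsto (kacz e x) Filter.atTop (nhds x) := by
  classical
  set E := seqAux g hframe hnorm with hEdef
  set e : ℕ → H := fun n => (E n).1 n with hedef
  have hagree : ∀ n k, k ≤ n → (E n).1 k = e k := by
    intro n
    induction n with
    | zero =>
      intro k hk
      have : k = 0 := Nat.le_zero.mp hk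
      subst this; rfl
    | succ n ih =>
      intro k hk
      rcases eq_or_lt_of_le hk with heq | hlt
      · subst heq; rfl
      · have hk2 : k ≤ n := Nat.lt_succ_iff.mp hlt
        have h1 : (E (n+1)).1 k = (E n).1 k := by
          rw [hEdef]
          simp only [seqAux]
          rw [Function.update_of_ne (by omega : k ≠ n+1)]
        rw [h1]; exact ih k hk2
  have hPfx : ∀ n, Pfx g e n := by
    intro n
    have h := (E n).2
    refine ⟨fun k hk => ?_, ?_, fun k hk hk' => ?_⟩
    · rw [← hagree n k hk]; exact h.1 k hk
    · rw [← hagree n 0 (Nat.zero_le n)]; exact h.2.1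
    · have hthis := h.2.2 k hk hk'
      rw [hagree n k hk'] at hthis
      rw [Finset.sum_congr rfl (fun i hi => by
        rw [hagree n i (le_trans (Nat.le_of_lt (Finset.mem_range.mp hi)) hk')]) ] at hthis
      exact hthis
  refine ⟨e, fun n => (hPfx n).1 n le_rfl, ((hPfx 0).2.1).symm,
    fun n hn => (hPfx n).2.2 n hn le_rfl, ?_⟩
  intro x
  have hsq : Filter.Tendsto (fun n => ‖x - kacz e x n‖ ^ 2) Filter.atTop (nhds 0) := by
    have h1 : ∀ n, ‖x - kacz e x n‖ ^ 2
        = ‖x‖ ^ 2 - ∑ i ∈ Finset.range (n+1), ‖⟪g i, x⟫‖ ^ 2 :=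
      fun n => normsq (hPfx n) x
    have h2 : Filter.Tendsto (fun n => ∑ i ∈ Finset.range n, ‖⟪g i, x⟫‖ ^ 2)
        Filter.atTop (nhds (‖x‖ ^ 2)) := (hframe x).tendsto_sum_nat
    have h3 : Filter.Tendsto (fun n => ∑ i ∈ Finset.range (n+1), ‖⟪g i, x⟫‖ ^ 2)
        Filter.atTop (nhds (‖x‖ ^ 2)) := h2.comp (Filter.tendsto_add_atTop_nat 1)
    have h4 := Filter.Tendsto.const_sub (‖x‖ ^ 2) h3
    simp only [sub_self] at h4
    simpa only [h1] using h4
  have hnorm0 : Filter.Tendsto (fun n => ‖x - kacz e x n‖) Filter.atTop (nhds 0) := by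
    have h5 : Filter.Tendsto (fun n => Real.sqrt (‖x - kacz e x n‖ ^ 2))
        Filter.atTop (nhds 0) := by
      have := (Real.continuous_sqrt.tendsto 0).comp hsq
      simpa [Function.comp_def, Real.sqrt_zero] using this
    have heq : (fun n => Real.sqrt (‖x - kacz e x n‖ ^ 2))
        = fun n => ‖x - kacz e x n‖ :=
      funext fun n => Real.sqrt_sq (norm_nonneg _)
    rw [heq] at h5
    exact h5
  rw [tendsto_iff_norm_sub_tendsto_zero]
  simpa only [norm_sub_rev] using hnorm0
end

section
/- If the operator I - S_{N-1} has kernel of dimension ≥ 2 (equivalently I - S_{N-1}* has kernel of dimension ≥ 2), then there exists a nonzero x orthogonal to g_0 and to all g_n for n ≥ N; hence if {g_0} ∪ {g_n : n ≥ N} is linearly dense for all N (stability), then ker(I - S_{N-1}) is one-dimensional for every N ≥ 1. -/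
/-!
The recursion for the Kaczmarz vectors reads `g (m + 1) = (1 - S m) (e (m + 1))`, and it factors
`1 - S (m + 1) = (1 - S m) ∘ (1 - ⟪e (m + 1), ·⟫ e (m + 1))`. Hence a vector `x` killed by
`(1 - S (N - 1))†` is killed by every later `(1 - S m)†`, so it is orthogonal to every `g n` with
`n ≥ N`. Since `S (N - 1)` and its adjoint take values in the finite-dimensional span of
`e 0, …, e (N - 1), g 0, …, g (N - 1)`, the kernels of `1 - S (N - 1)` and of its adjoint have the
same dimension; if it is at least two, some nonzero `x` in the adjoint kernel is also orthogonal
to `g 0`. Under stability no such `x` exists, while `e (N - 1)` always lies in the kernel.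
-/

open scoped ComplexInnerProductSpace InnerProductSpace InnerProduct
open Module LinearMap

section

variable {𝕜 E : Type*} [RCLike 𝕜] [NormedAddCommGroup E] [InnerProductSpace 𝕜 E]

theorem LinearMap.finrank_ker_restrict {R M : Type*} [Ring R] [AddCommGroup M] [Module R M]
    {f : M →ₗ[R] M} {p : Submodule R M} (hf : ∀ x ∈ p, f x ∈ p) (hker : ker f ≤ p) :
    finrank R (ker (f.restrict hf)) = finrank R (ker f) := by
  rw [ker_restrict]
  exact (Submodule.comapSubtypeEquivOfLe hker).finrank_eq

theorem LinearMap.finrank_ker_adjoint [FiniteDimensional 𝕜 E] (A : E →ₗ[𝕜] E) :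
    finrank 𝕜 (ker A.adjoint) = finrank 𝕜 (ker A) := by
  have hA := A.finrank_range_add_finrank_ker
  have hA' := A.adjoint.finrank_range_add_finrank_ker
  rw [finrank_range_adjoint] at hA'
  omega

theorem Submodule.exists_ne_zero_inner_eq_zero_of_two_le_finrank {K : Submodule 𝕜 E}
    (hK : 2 ≤ finrank 𝕜 K) (u : E) : ∃ x ∈ K, x ≠ 0 ∧ ⟪u, x⟫_𝕜 = 0 := by
  have : FiniteDimensional 𝕜 K := Module.finite_of_finrank_pos (by omega)
  let φ : K →ₗ[𝕜] 𝕜 := (innerₛₗ 𝕜 u).comp K.subtype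
  obtain ⟨⟨x, hxK⟩, hx, hx0⟩ := Submodule.exists_mem_ne_zero_of_ne_bot
    (ker_ne_bot_of_finrank_lt (f := φ) (by rw [finrank_self]; omega))
  exact ⟨x, hxK, fun h => hx0 (Subtype.ext h), hx⟩

theorem eq_zero_of_forall_inner_eq_zero_of_dense_span [CompleteSpace E] {s : Set E}
    (hs : (Submodule.span 𝕜 s).topologicalClosure = ⊤) {x : E} (hx : ∀ u ∈ s, ⟪u, x⟫_𝕜 = 0) :
    x = 0 := by
  have hspan : Submodule.span 𝕜 s ≤ (𝕜 ∙ x)ᗮ := Submodule.span_le.mpr fun u hu =>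
    Submodule.mem_orthogonal_singleton_iff_inner_left.mpr (hx u hu)
  have hx_orth : x ∈ (𝕜 ∙ x)ᗮ := Submodule.topologicalClosure_minimal _ hspan
    (Submodule.isClosed_orthogonal _) (hs ▸ Submodule.mem_top)
  exact inner_self_eq_zero.mp (Submodule.mem_orthogonal_singleton_iff_inner_right.mp hx_orth)

namespace ContinuousLinearMap

variable {F : E →L[𝕜] E} {V : Submodule 𝕜 E}

theorem ker_one_sub_le (hF : ∀ y, F y ∈ V) : ker ((1 - F : E →L[𝕜] E) : E →ₗ[𝕜] E) ≤ V := by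
  intro x hx
  have hx_eq : x = F x := sub_eq_zero.mp hx
  exact hx_eq ▸ hF x

variable [CompleteSpace E]

theorem adjoint_restrict [FiniteDimensional 𝕜 V] {T : E →L[𝕜] E}
    (hT : ∀ v ∈ V, T v ∈ V) (hT' : ∀ v ∈ V, (T†) v ∈ V) :
    ((T : E →ₗ[𝕜] E).restrict hT).adjoint = (T† : E →ₗ[𝕜] E).restrict hT' := by
  refine ((LinearMap.eq_adjoint_iff _ _).mpr fun x y => ?_).symm
  exact T.adjoint_inner_left (y : E) (x : E)

theorem finrank_ker_adjoint_one_sub [FiniteDimensional 𝕜 V] (hF : ∀ y, F y ∈ V)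
    (hF' : ∀ y, (F†) y ∈ V) :
    finrank 𝕜 (ker (((1 - F)† : E →L[𝕜] E) : E →ₗ[𝕜] E))
      = finrank 𝕜 (ker ((1 - F : E →L[𝕜] E) : E →ₗ[𝕜] E)) := by
  have hadj : (1 - F)† = 1 - F† := by rw [map_sub, adjoint_one]
  have hT : ∀ v ∈ V, (1 - F) v ∈ V := fun v hv => V.sub_mem hv (hF v)
  have hT' : ∀ v ∈ V, ((1 - F)†) v ∈ V := fun v hv => hadj ▸ V.sub_mem hv (hF' v)
  calc finrank 𝕜 (ker (((1 - F)† : E →L[𝕜] E) : E →ₗ[𝕜] E))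
      = finrank 𝕜 (ker ((((1 - F)† : E →L[𝕜] E) : E →ₗ[𝕜] E).restrict hT')) :=
        (finrank_ker_restrict hT' (hadj ▸ ker_one_sub_le hF')).symm
    _ = finrank 𝕜 (ker (((1 - F : E →L[𝕜] E) : E →ₗ[𝕜] E).restrict hT).adjoint) := by
        rw [adjoint_restrict hT hT']
    _ = finrank 𝕜 (ker (((1 - F : E →L[𝕜] E) : E →ₗ[𝕜] E).restrict hT)) :=
        finrank_ker_adjoint _
    _ = finrank 𝕜 (ker ((1 - F : E →L[𝕜] E) : E →ₗ[𝕜] E)) :=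
        finrank_ker_restrict hT (ker_one_sub_le hF)

end ContinuousLinearMap

end

namespace Kaczmarz

variable {H : Type*} [NormedAddCommGroup H] [InnerProductSpace ℂ H] {e g : ℕ → H}
  {S : ℕ → H →L[ℂ] H}
  (hS : ∀ (n : ℕ) (y : H), S n y = ∑ j ∈ Finset.range (n + 1), ⟪e j, y⟫ • g j)
  (hg : ∀ n, 0 < n → g n = e n - ∑ i ∈ Finset.range n, ⟪e i, e n⟫ • g i)

include hS

theorem S_apply_mem_span (n : ℕ) (y : H) :
    S n y ∈ Submodule.span ℂ (g '' ↑(Finset.range (n + 1))) := by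
  rw [hS]
  exact Submodule.sum_mem _ fun j hj =>
    Submodule.smul_mem _ _ (Submodule.subset_span (Set.mem_image_of_mem g hj))

theorem finiteDimensional_ker_one_sub_S (n : ℕ) :
    FiniteDimensional ℂ (ker ((1 - S n : H →L[ℂ] H) : H →ₗ[ℂ] H)) :=
  have : FiniteDimensional ℂ (Submodule.span ℂ (g '' ↑(Finset.range (n + 1)))) :=
    FiniteDimensional.span_of_finite ℂ ((Finset.range (n + 1)).finite_toSet.image g)
  Submodule.finiteDimensional_of_le (ContinuousLinearMap.ker_one_sub_le (S_apply_mem_span hS n))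

theorem S_succ_apply (m : ℕ) (y : H) : S (m + 1) y = S m y + ⟪e (m + 1), y⟫ • g (m + 1) := by
  rw [hS, hS, Finset.sum_range_succ]

section Adjoint

variable [CompleteSpace H]

theorem adjoint_S_apply (n : ℕ) (x : H) :
    ((S n)†) x = ∑ j ∈ Finset.range (n + 1), ⟪g j, x⟫ • e j := by
  refine ext_inner_right ℂ fun v => ?_
  rw [ContinuousLinearMap.adjoint_inner_left, hS, inner_sum, sum_inner]
  refine Finset.sum_congr rfl fun j _ => ?_
  rw [inner_smul_left, inner_smul_right, inner_conj_symm, mul_comm]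

theorem finrank_ker_adjoint_one_sub_S (n : ℕ) :
    finrank ℂ (ker (((1 - S n)† : H →L[ℂ] H) : H →ₗ[ℂ] H))
      = finrank ℂ (ker ((1 - S n : H →L[ℂ] H) : H →ₗ[ℂ] H)) := by
  set s := Finset.range (n + 1)
  have hspan_e : Submodule.span ℂ (e '' ↑s) ≤ Submodule.span ℂ (e '' ↑s ∪ g '' ↑s) :=
    Submodule.span_mono Set.subset_union_left
  have hspan_g : Submodule.span ℂ (g '' ↑s) ≤ Submodule.span ℂ (e '' ↑s ∪ g '' ↑s) :=
    Submodule.span_mono Set.subset_union_right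
  have : FiniteDimensional ℂ (Submodule.span ℂ (e '' ↑s ∪ g '' ↑s)) :=
    FiniteDimensional.span_of_finite ℂ ((s.finite_toSet.image e).union (s.finite_toSet.image g))
  refine ContinuousLinearMap.finrank_ker_adjoint_one_sub
    (fun y => hspan_g (S_apply_mem_span hS n y)) fun x => ?_
  rw [adjoint_S_apply hS]
  exact hspan_e (Submodule.sum_mem _ fun j hj =>
    Submodule.smul_mem _ _ (Submodule.subset_span (Set.mem_image_of_mem e hj)))

end Adjoint

section Recursion

include hg

theorem g_succ (m : ℕ) : g (m + 1) = (1 - S m) (e (m + 1)) := by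
  rw [hg (m + 1) m.succ_pos, _root_.sub_apply, one_apply_eq_self, hS]

theorem S_apply_e_self (hg0 : g 0 = e 0) (he : ∀ n, ‖e n‖ = 1) (m : ℕ) : S m (e m) = e m := by
  have he_self : ⟪e m, e m⟫ = 1 := by rw [inner_self_eq_norm_sq_to_K, he m]; norm_num
  cases m with
  | zero => rw [hS, Finset.sum_range_one, he_self, one_smul, hg0]
  | succ m => rw [S_succ_apply hS, he_self, one_smul, g_succ hS hg]; simp

theorem one_sub_S_succ (m : ℕ) :
    (1 - S (m + 1) : H →L[ℂ] H)
      = (1 - S m) ∘L (1 - (innerSL ℂ (e (m + 1))).smulRight (e (m + 1))) := by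
  ext y
  simp only [ContinuousLinearMap.comp_apply, _root_.sub_apply,
    one_apply_eq_self, ContinuousLinearMap.smulRight_apply, innerSL_apply_apply,
    map_sub, map_smul, S_succ_apply hS, ← g_succ hS hg]
  abel

variable [CompleteSpace H]

theorem ker_adjoint_one_sub_S_mono {k m : ℕ} (hkm : k ≤ m) :
    ker (((1 - S k)† : H →L[ℂ] H) : H →ₗ[ℂ] H) ≤ ker (((1 - S m)† : H →L[ℂ] H) : H →ₗ[ℂ] H) := by
  induction m, hkm using Nat.le_induction with
  | base => exact le_rfl
  | succ m _ ih =>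
    intro x hx
    have hx_m : ((1 - S m)†) x = 0 := ih hx
    change ((1 - S (m + 1))†) x = 0
    rw [one_sub_S_succ hS hg, ContinuousLinearMap.adjoint_comp, ContinuousLinearMap.comp_apply,
      hx_m, map_zero]

theorem inner_g_eq_zero_of_mem_ker_adjoint {k n : ℕ} (hkn : k < n) {x : H}
    (hx : x ∈ ker (((1 - S k)† : H →L[ℂ] H) : H →ₗ[ℂ] H)) : ⟪g n, x⟫ = 0 := by
  obtain ⟨m, rfl⟩ : ∃ m, n = m + 1 := ⟨n - 1, by omega⟩
  have hx_m : ((1 - S m)†) x = 0 := ker_adjoint_one_sub_S_mono hS hg (Nat.le_of_lt_succ hkn) hx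
  rw [g_succ hS hg, ← ContinuousLinearMap.adjoint_inner_right, hx_m, inner_zero_right]

theorem exists_ne_zero_orthogonal_of_two_le_rank {N : ℕ} (hN : 1 ≤ N)
    (hrank : 2 ≤ Module.rank ℂ (ker ((1 - S (N - 1) : H →L[ℂ] H) : H →ₗ[ℂ] H))) :
    ∃ x : H, x ≠ 0 ∧ ⟪g 0, x⟫ = 0 ∧ ∀ n, N ≤ n → ⟪g n, x⟫ = 0 := by
  have := finiteDimensional_ker_one_sub_S hS (N - 1)
  rw [← finrank_eq_rank, ← finrank_ker_adjoint_one_sub_S hS] at hrank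
  obtain ⟨x, hx, hx0, hxg0⟩ :=
    Submodule.exists_ne_zero_inner_eq_zero_of_two_le_finrank (by exact_mod_cast hrank) (g 0)
  exact ⟨x, hx0, hxg0, fun n hn => inner_g_eq_zero_of_mem_ker_adjoint hS hg (by omega) hx⟩

end Recursion

end Kaczmarz

theorem kaczmarz_kernel_dimension_general
    {H : Type*} [NormedAddCommGroup H] [InnerProductSpace ℂ H] [CompleteSpace H]
    (e g : ℕ → H) (he : ∀ n, ‖e n‖ = 1)
    (hg0 : g 0 = e 0)
    (hg : ∀ n, 0 < n → g n = e n - ∑ i ∈ Finset.range n, ⟪e i, e n⟫ • g i)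
    (S : ℕ → H →L[ℂ] H)
    (hS : ∀ (n : ℕ) (y : H), S n y = ∑ j ∈ Finset.range (n + 1), ⟪e j, y⟫ • g j) :
    (∀ N, 1 ≤ N →
      2 ≤ Module.rank ℂ (LinearMap.ker (((1 - S (N - 1)) : H →L[ℂ] H) : H →ₗ[ℂ] H)) →
      ∃ x : H, x ≠ 0 ∧ ⟪g 0, x⟫ = 0 ∧ ∀ n, N ≤ n → ⟪g n, x⟫ = 0) ∧
    ((∀ N : ℕ,
        (Submodule.span ℂ (insert (g 0) (g '' {n | N ≤ n}))).topologicalClosure = ⊤) →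
      ∀ N, 1 ≤ N →
        Module.rank ℂ (LinearMap.ker (((1 - S (N - 1)) : H →L[ℂ] H) : H →ₗ[ℂ] H)) = 1) := by
  refine ⟨fun N hN => Kaczmarz.exists_ne_zero_orthogonal_of_two_le_rank hS hg hN,
    fun hdense N hN => ?_⟩
  have := Kaczmarz.finiteDimensional_ker_one_sub_S hS (N - 1)
  have he_mem : e (N - 1) ∈ LinearMap.ker (((1 - S (N - 1)) : H →L[ℂ] H) : H →ₗ[ℂ] H) :=
    sub_eq_zero.mpr (Kaczmarz.S_apply_e_self hS hg hg0 he (N - 1)).symm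
  have he_ne : e (N - 1) ≠ 0 := norm_ne_zero_iff.mp (by rw [he]; exact one_ne_zero)
  have hpos := Submodule.one_le_finrank_iff.mpr ((Submodule.ne_bot_iff _).mpr ⟨_, he_mem, he_ne⟩)
  have hlt : ¬ 2 ≤ finrank ℂ (LinearMap.ker (((1 - S (N - 1)) : H →L[ℂ] H) : H →ₗ[ℂ] H)) := by
    intro h2
    obtain ⟨x, hx0, hxg0, hxg⟩ := Kaczmarz.exists_ne_zero_orthogonal_of_two_le_rank hS hg hN
      (by rw [← finrank_eq_rank]; exact_mod_cast h2)
    refine hx0 (eq_zero_of_forall_inner_eq_zero_of_dense_span (hdense N) ?_)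
    rintro u (rfl | ⟨n, hn, rfl⟩)
    exacts [hxg0, hxg n hn]
  rw [← finrank_eq_rank, show finrank ℂ _ = 1 by omega, Nat.cast_one]

theorem kaczmarz_kernel_dimension
    {H : Type*} [NormedAddCommGroup H] [InnerProductSpace ℂ H] [CompleteSpace H]
    (e g : ℕ → H) (he : ∀ n, ‖e n‖ = 1)
    (hg0 : g 0 = e 0)
    (hg : ∀ n, 0 < n → g n = e n - ∑ i ∈ Finset.range n, ⟪e i, e n⟫ • g i)
    (hbessel : ∀ x : H, ∀ s : Finset ℕ, ∑ n ∈ s, ‖⟪g n, x⟫‖ ^ 2 ≤ ‖x‖ ^ 2)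
    (S : ℕ → H →L[ℂ] H)
    (hS : ∀ (n : ℕ) (y : H), S n y = ∑ j ∈ Finset.range (n + 1), ⟪e j, y⟫ • g j) :
    (∀ N, 1 ≤ N →
      2 ≤ Module.rank ℂ (LinearMap.ker (((1 - S (N - 1)) : H →L[ℂ] H) : H →ₗ[ℂ] H)) →
      ∃ x : H, x ≠ 0 ∧ ⟪g 0, x⟫ = 0 ∧ ∀ n, N ≤ n → ⟪g n, x⟫ = 0) ∧
    ((∀ N : ℕ,
        (Submodule.span ℂ (insert (g 0) (g '' {n | N ≤ n}))).topologicalClosure = ⊤) →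
      ∀ N, 1 ≤ N →
        Module.rank ℂ (LinearMap.ker (((1 - S (N - 1)) : H →L[ℂ] H) : H →ₗ[ℂ] H)) = 1) :=
  kaczmarz_kernel_dimension_general e g he hg0 hg S hS
end

section
/- A linearly dense sequence {g_n}_{n≥0} in a Hilbert space is a normalized tight (Parseval) frame if and only if its Gram matrix G = (⟨g_i, g_j⟩) defines an orthogonal projection operator on ℓ²(ℕ). -/
open scoped ComplexInnerProductSpace

/-!
The analysis operator `A x = (⟪g n, x⟫)ₙ` of a Parseval frame is an isometry into `ℓ²`, so the
orthogonal projection onto the closure of its range sends the basis vector `e j` to `A (g j)`: the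
difference is orthogonal to every `A x` because `⟪A x, A (g j)⟫ = ⟪x, g j⟫ = conj (A x j)`. Hence
its matrix is the Gram matrix `⟪g i, g j⟫`.

Conversely, let a self-adjoint idempotent `P` have that matrix. For `y = ∑ cᵢ gᵢ` and
`u = ∑ cᵢ eᵢ`, the vector `P u` has coordinates `⟪g n, y⟫` and `‖P u‖² = ⟪u, P u⟫ = ‖y‖²`: the
Parseval identity holds on the span of `g`. By density it extends first as Bessel's inequality, a
closed condition that makes `A` bounded, and then as `‖A x‖ = ‖x‖`.

The theorem is phrased with the entries `⟪g j, g i⟫`, the complex conjugates of the Gram matrix;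
the conjugation `T ↦ star ∘ T ∘ star` of operators on `ℓ²` passes between the two.
-/

section

open scoped InnerProductSpace ComplexConjugate lp
open Submodule

variable {ι 𝕜 : Type*} [RCLike 𝕜]

namespace lp

theorem hasSum_norm_sq {E : ι → Type*} [∀ i, NormedAddCommGroup (E i)] (f : lp E 2) :
    HasSum (fun i => ‖f i‖ ^ 2) (‖f‖ ^ 2) := by
  simpa using lp.hasSum_norm (p := 2) (by norm_num) f

theorem inner_single_one_left [DecidableEq ι] (i : ι) (f : ℓ²(ι, 𝕜)) :
    ⟪lp.single 2 i (1 : 𝕜), f⟫_𝕜 = f i := by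
  simp [lp.inner_single_left]

theorem star_single [DecidableEq ι] (i : ι) (a : 𝕜) :
    star (lp.single 2 i a : ℓ²(ι, 𝕜)) = lp.single 2 i (star a) := by
  ext j
  rcases eq_or_ne j i with rfl | h <;> simp [*]

theorem inner_star_star (f h : ℓ²(ι, 𝕜)) : ⟪star f, star h⟫_𝕜 = conj ⟪f, h⟫_𝕜 := by
  simp [lp.inner_eq_tsum, RCLike.conj_tsum, mul_comm]

theorem inner_star_left (f h : ℓ²(ι, 𝕜)) : ⟪star f, h⟫_𝕜 = conj ⟪f, star h⟫_𝕜 := by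
  rw [← inner_star_star, star_star]

noncomputable def conjStar (T : ℓ²(ι, 𝕜) →L[𝕜] ℓ²(ι, 𝕜)) : ℓ²(ι, 𝕜) →L[𝕜] ℓ²(ι, 𝕜) :=
  ((starₗᵢ 𝕜 : ℓ²(ι, 𝕜) ≃ₗᵢ⋆[𝕜] ℓ²(ι, 𝕜)) : ℓ²(ι, 𝕜) →L⋆[𝕜] ℓ²(ι, 𝕜)).comp
    (T.comp ((starₗᵢ 𝕜 : ℓ²(ι, 𝕜) ≃ₗᵢ⋆[𝕜] ℓ²(ι, 𝕜)) : ℓ²(ι, 𝕜) →L⋆[𝕜] ℓ²(ι, 𝕜)))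

@[simp]
theorem conjStar_apply (T : ℓ²(ι, 𝕜) →L[𝕜] ℓ²(ι, 𝕜)) (f : ℓ²(ι, 𝕜)) :
    conjStar T f = star (T (star f)) := rfl

theorem inner_single_conjStar [DecidableEq ι] (T : ℓ²(ι, 𝕜) →L[𝕜] ℓ²(ι, 𝕜)) (i j : ι) :
    ⟪lp.single 2 i (1 : 𝕜), conjStar T (lp.single 2 j 1)⟫_𝕜 =
      conj ⟪lp.single 2 i (1 : 𝕜), T (lp.single 2 j 1)⟫_𝕜 := by
  simp [inner_single_one_left, star_single]

theorem _root_.IsStarProjection.conjStar {T : ℓ²(ι, 𝕜) →L[𝕜] ℓ²(ι, 𝕜)}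
    (hT : IsStarProjection T) :
    IsStarProjection (conjStar T) where
  isIdempotentElem := by
    ext1 f
    simpa using congr(star ($(hT.isIdempotentElem.eq) (star f)))
  isSelfAdjoint := by
    rw [ContinuousLinearMap.isSelfAdjoint_iff_isSymmetric]
    intro f h
    have hsym : ∀ a b, ⟪T a, b⟫_𝕜 = ⟪a, T b⟫_𝕜 := hT.isSelfAdjoint.isSymmetric
    change ⟪star (T (star f)), h⟫_𝕜 = ⟪f, star (T (star h))⟫_𝕜
    rw [inner_star_left, hsym, inner_star_left, RCLike.conj_conj]

end lp

variable {E : Type*} [NormedAddCommGroup E] [InnerProductSpace 𝕜 E]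

variable (𝕜) in
def IsBessel (g : ι → E) : Prop :=
  ∀ (x : E) (s : Finset ι), ∑ n ∈ s, ‖⟪g n, x⟫_𝕜‖ ^ 2 ≤ ‖x‖ ^ 2

variable (𝕜) in
def IsParsevalFrame (g : ι → E) : Prop :=
  ∀ x : E, HasSum (fun n => ‖⟪g n, x⟫_𝕜‖ ^ 2) (‖x‖ ^ 2)

variable {g : ι → E}

theorem IsParsevalFrame.isBessel (hg : IsParsevalFrame 𝕜 g) : IsBessel 𝕜 g :=
  fun x s => sum_le_hasSum s (fun _ _ => by positivity) (hg x)

noncomputable def analysisOp (hg : IsBessel 𝕜 g) : E →L[𝕜] ℓ²(ι, 𝕜) :=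
  LinearMap.mkContinuous
    { toFun x := ⟨fun n => ⟪g n, x⟫_𝕜, memℓp_gen' (C := ‖x‖ ^ 2) fun s => by simpa using hg x s⟩
      map_add' x y := by ext; exact inner_add_right _ _ _
      map_smul' c x := by ext; simp [inner_smul_right] }
    1 fun x => by
      rw [one_mul]
      exact lp.norm_le_of_forall_sum_le (by norm_num) (norm_nonneg x) fun s => by simpa using hg x s

@[simp]
theorem analysisOp_apply (hg : IsBessel 𝕜 g) (x : E) (n : ι) : analysisOp hg x n = ⟪g n, x⟫_𝕜 :=
  rfl

theorem norm_analysisOp_eq_iff_hasSum (hg : IsBessel 𝕜 g) (x : E) :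
    ‖analysisOp hg x‖ = ‖x‖ ↔ HasSum (fun n => ‖⟪g n, x⟫_𝕜‖ ^ 2) (‖x‖ ^ 2) := by
  have hA := lp.hasSum_norm_sq (analysisOp hg x)
  simp only [analysisOp_apply] at hA
  refine ⟨fun h => h ▸ hA, fun h => ?_⟩
  exact (sq_eq_sq₀ (norm_nonneg _) (norm_nonneg _)).1 (hA.unique h)

theorem IsParsevalFrame.exists_isStarProjection_gram [DecidableEq ι]
    (hg : IsParsevalFrame 𝕜 g) :
    ∃ P : ℓ²(ι, 𝕜) →L[𝕜] ℓ²(ι, 𝕜), IsStarProjection P ∧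
      ∀ i j, ⟪lp.single 2 i (1 : 𝕜), P (lp.single 2 j 1)⟫_𝕜 = ⟪g i, g j⟫_𝕜 := by
  set A := analysisOp hg.isBessel
  have hA : ∀ x y, ⟪A x, A y⟫_𝕜 = ⟪x, y⟫_𝕜 := (LinearMap.norm_map_iff_inner_map_map A).1
    fun x => (norm_analysisOp_eq_iff_hasSum _ x).2 (hg x)
  set K := A.range.topologicalClosure
  have hK : ∀ j, K.starProjection (lp.single 2 j 1) = A (g j) := by
    intro j
    refine eq_starProjection_of_mem_orthogonal (le_topologicalClosure _ ⟨g j, rfl⟩) ?_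
    rw [orthogonal_closure]
    rintro _ ⟨x, rfl⟩
    rw [ContinuousLinearMap.coe_coe, inner_sub_right, hA, ← inner_conj_symm,
      lp.inner_single_one_left, analysisOp_apply, inner_conj_symm, sub_self]
  refine ⟨K.starProjection, isStarProjection_starProjection, fun i j => ?_⟩
  rw [hK, lp.inner_single_one_left, analysisOp_apply]

theorem inner_sum_map_sum_of_gram {F : Type*} [NormedAddCommGroup F] [InnerProductSpace 𝕜 F]
    {e : ι → F} {P : F →ₗ[𝕜] F} (hP : ∀ i j, ⟪e i, P (e j)⟫_𝕜 = ⟪g i, g j⟫_𝕜)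
    (s t : Finset ι) (a c : ι → 𝕜) :
    ⟪∑ i ∈ s, a i • e i, P (∑ j ∈ t, c j • e j)⟫_𝕜 =
      ⟪∑ i ∈ s, a i • g i, ∑ j ∈ t, c j • g j⟫_𝕜 := by
  simp [sum_inner, inner_sum, inner_smul_left, inner_smul_right, hP]

theorem hasSum_norm_inner_sq_of_mem_span [DecidableEq ι] {P : ℓ²(ι, 𝕜) →L[𝕜] ℓ²(ι, 𝕜)}
    (hP : IsStarProjection P)
    (hgram : ∀ i j, ⟪lp.single 2 i (1 : 𝕜), P (lp.single 2 j 1)⟫_𝕜 = ⟪g i, g j⟫_𝕜)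
    {y : E} (hy : y ∈ span 𝕜 (Set.range g)) :
    HasSum (fun n => ‖⟪g n, y⟫_𝕜‖ ^ 2) (‖y‖ ^ 2) := by
  obtain ⟨c, rfl⟩ := Finsupp.mem_span_range_iff_exists_finsupp.1 hy
  simp only [Finsupp.sum]
  set u : ℓ²(ι, 𝕜) := ∑ i ∈ c.support, c i • lp.single 2 i 1
  have hgram_sum := inner_sum_map_sum_of_gram (P := (P : ℓ²(ι, 𝕜) →ₗ[𝕜] ℓ²(ι, 𝕜))) hgram
  have hcoord : ∀ n, P u n = ⟪g n, ∑ i ∈ c.support, c i • g i⟫_𝕜 := fun n => by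
    have h := hgram_sum {n} c.support 1 c
    simp only [Finset.sum_singleton, Pi.one_apply, one_smul, lp.inner_single_one_left] at h
    exact h
  have hnorm : ‖P u‖ ^ 2 = ‖∑ i ∈ c.support, c i • g i‖ ^ 2 := by
    have hPP : ⟪P u, P u⟫_𝕜 = ⟪u, P u⟫_𝕜 := calc
      ⟪P u, P u⟫_𝕜 = ⟪u, P (P u)⟫_𝕜 := hP.isSelfAdjoint.isSymmetric _ _
      _ = ⟪u, P u⟫_𝕜 := congrArg (fun Q => ⟪u, Q u⟫_𝕜) hP.isIdempotentElem.eq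
    rw [norm_sq_eq_re_inner (𝕜 := 𝕜), norm_sq_eq_re_inner (𝕜 := 𝕜), hPP]
    exact congrArg _ (hgram_sum c.support c.support c c)
  simpa [hcoord, hnorm] using lp.hasSum_norm_sq (P u)

theorem IsBessel.of_dense {s : Set E} (hs : Dense s)
    (h : ∀ y ∈ s, HasSum (fun n => ‖⟪g n, y⟫_𝕜‖ ^ 2) (‖y‖ ^ 2)) : IsBessel 𝕜 g := fun x t =>
  hs.induction (fun y hy => sum_le_hasSum t (fun _ _ => by positivity) (h y hy))
    (isClosed_le (by fun_prop) (by fun_prop)) x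

theorem IsParsevalFrame.of_dense {s : Set E} (hs : Dense s)
    (h : ∀ y ∈ s, HasSum (fun n => ‖⟪g n, y⟫_𝕜‖ ^ 2) (‖y‖ ^ 2)) : IsParsevalFrame 𝕜 g := by
  have hB := IsBessel.of_dense hs h
  intro x
  rw [← norm_analysisOp_eq_iff_hasSum hB]
  exact hs.induction (fun y hy => (norm_analysisOp_eq_iff_hasSum hB y).2 (h y hy))
    (isClosed_eq (by fun_prop) (by fun_prop)) x

theorem isParsevalFrame_iff_exists_isStarProjection_gram [DecidableEq ι]
    (hg : (span 𝕜 (Set.range g)).topologicalClosure = ⊤) :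
    IsParsevalFrame 𝕜 g ↔ ∃ P : ℓ²(ι, 𝕜) →L[𝕜] ℓ²(ι, 𝕜), IsStarProjection P ∧
      ∀ i j, ⟪lp.single 2 i (1 : 𝕜), P (lp.single 2 j 1)⟫_𝕜 = ⟪g i, g j⟫_𝕜 :=
  ⟨IsParsevalFrame.exists_isStarProjection_gram, fun ⟨_, hP, hgram⟩ =>
    .of_dense (dense_iff_topologicalClosure_eq_top.2 hg) fun _ =>
      hasSum_norm_inner_sq_of_mem_span hP hgram⟩

end

theorem parseval_frame_iff_gram_projection_general
    {H : Type*} [NormedAddCommGroup H] [InnerProductSpace ℂ H]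
    (g : ℕ → H)
    (hdense : (Submodule.span ℂ (Set.range g)).topologicalClosure = ⊤) :
    (∀ x : H, HasSum (fun n => ‖⟪g n, x⟫‖ ^ 2) (‖x‖ ^ 2)) ↔
      ∃ T : lp (fun _ : ℕ => ℂ) 2 →L[ℂ] lp (fun _ : ℕ => ℂ) 2,
        IsSelfAdjoint T ∧ T.comp T = T ∧
        ∀ i j : ℕ, ⟪lp.single 2 i (1 : ℂ), T (lp.single 2 j (1 : ℂ))⟫ = ⟪g j, g i⟫ := by
  refine (isParsevalFrame_iff_exists_isStarProjection_gram hdense).trans ⟨?_, ?_⟩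
  · rintro ⟨P, hP, hgram⟩
    exact ⟨lp.conjStar P, hP.conjStar.isSelfAdjoint, hP.conjStar.isIdempotentElem.eq,
      fun i j => by rw [lp.inner_single_conjStar, hgram, inner_conj_symm]⟩
  · rintro ⟨T, hsa, hidem, hT⟩
    exact ⟨lp.conjStar T, IsStarProjection.conjStar ⟨hidem, hsa⟩,
      fun i j => by rw [lp.inner_single_conjStar, hT, inner_conj_symm]⟩

theorem parseval_frame_iff_gram_projection
    {H : Type*} [NormedAddCommGroup H] [InnerProductSpace ℂ H] [CompleteSpace H]
    (g : ℕ → H)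
    (hdense : (Submodule.span ℂ (Set.range g)).topologicalClosure = ⊤) :
    (∀ x : H, HasSum (fun n => ‖⟪g n, x⟫‖ ^ 2) (‖x‖ ^ 2)) ↔
      ∃ T : lp (fun _ : ℕ => ℂ) 2 →L[ℂ] lp (fun _ : ℕ => ℂ) 2,
        IsSelfAdjoint T ∧ T.comp T = T ∧
        ∀ i j : ℕ, ⟪lp.single 2 i (1 : ℂ), T (lp.single 2 j (1 : ℂ))⟫ = ⟪g j, g i⟫ :=
  parseval_frame_iff_gram_projection_general g hdense
end

section
/- With M the strictly lower triangular part of the Gram matrix of {e_n} and U the strictly lower triangular matrix defined by (I+U)(I+M) = I, one has ⟨g_i, g_j⟩ = ⟨(I - UU*)δ_j, δ_i⟩ in ℓ²(ℕ) for all i, j. -/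
open scoped ComplexInnerProductSpace

-- auxiliary: for unitriangular matrices, the right-inverse relation implies the left one
lemma tri_inv_comm (U M : ℕ → ℕ → ℂ)
    (hUtri : ∀ i j, i ≤ j → U i j = 0)
    (hMtri : ∀ i j, i ≤ j → M i j = 0)
    (hUM : ∀ i j, (∑ k ∈ Finset.range (i + 1),
        (if i = k then 1 else U i k) * (if k = j then 1 else M k j)) =
      if i = j then 1 else 0) :
    ∀ i j, (∑ k ∈ Finset.range (i + 1),
        (if i = k then 1 else M i k) * (if k = j then 1 else U k j)) =
      if i = j then 1 else 0 := by
  intro i j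
  set n := max i j + 1 with hn
  have hi : i < n := by omega
  have hj : j < n := by omega
  have key : ∀ (V : ℕ → ℕ → ℂ), (∀ a b, a ≤ b → V a b = 0) →
      ∀ (a : ℕ) (f : ℕ → ℂ), a < n →
      ∑ k ∈ Finset.range n, (if a = k then 1 else V a k) * f k
        = ∑ k ∈ Finset.range (a + 1), (if a = k then 1 else V a k) * f k := by
    intro V hV a f ha
    symm
    apply Finset.sum_subset (Finset.range_subset_range.2 (by omega))
    intro k hk hk'
    simp only [Finset.mem_range, not_lt] at hk hk'
    rw [if_neg (by omega), hV a k (by omega), zero_mul]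
  let A : Matrix (Fin n) (Fin n) ℂ := fun a b => if (a : ℕ) = (b : ℕ) then 1 else U a b
  let B : Matrix (Fin n) (Fin n) ℂ := fun a b => if (a : ℕ) = (b : ℕ) then 1 else M a b
  have hAB : A * B = 1 := by
    ext a b
    rw [Matrix.mul_apply, Matrix.one_apply]
    have h1 : ∑ k : Fin n, A a k * B k b
        = ∑ k ∈ Finset.range n, (if (a : ℕ) = k then 1 else U a k) *
            (if k = (b : ℕ) then 1 else M k b) :=
      Fin.sum_univ_eq_sum_range
        (fun k => (if (a : ℕ) = k then 1 else U a k) * (if k = (b : ℕ) then 1 else M k b)) n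
    rw [h1, key U hUtri a _ a.isLt, hUM a b]
    simp [Fin.ext_iff]
  have hBA : B * A = 1 := mul_eq_one_comm.mp hAB
  have h2 := congrFun (congrFun hBA ⟨i, hi⟩) ⟨j, hj⟩
  rw [Matrix.mul_apply, Matrix.one_apply] at h2
  have h1 : ∑ k : Fin n, B ⟨i, hi⟩ k * A k ⟨j, hj⟩
      = ∑ k ∈ Finset.range n, (if i = k then 1 else M i k) *
          (if k = j then 1 else U k j) :=
    Fin.sum_univ_eq_sum_range
      (fun k => (if i = k then 1 else M i k) * (if k = j then 1 else U k j)) n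
  rw [h1, key M hMtri i _ hi] at h2
  rw [h2]
  simp [Fin.ext_iff]

theorem gram_of_kaczmarz_vectors_eq_one_sub_UUstar
    {H : Type*} [NormedAddCommGroup H] [InnerProductSpace ℂ H]
    (e g : ℕ → H) (he : ∀ n, ‖e n‖ = 1)
    (hg0 : g 0 = e 0)
    (hg : ∀ n, 0 < n → g n = e n - ∑ i ∈ Finset.range n, ⟪e i, e n⟫ • g i)
    -- `M` is the strictly lower triangular part of the Gram matrix of `e`:
    -- `M i j = ⟨e_i, e_j⟩` for `i > j`, `0` otherwise.
    (M U : ℕ → ℕ → ℂ)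
    (hM : ∀ i j, M i j = if j < i then ⟪e j, e i⟫ else 0)
    -- `U` is strictly lower triangular and `(I + U)(I + M) = I`:
    (hUtri : ∀ i j, i ≤ j → U i j = 0)
    (hUM : ∀ i j, (∑ k ∈ Finset.range (i + 1),
        (if i = k then 1 else U i k) * (if k = j then 1 else M k j)) =
      if i = j then 1 else 0) :
    -- `⟨g_i, g_j⟩ = ⟨(I - UU*)δ_j, δ_i⟩ = δ_{ij} - (UU*)(i,j)`.
    ∀ i j : ℕ, ⟪g j, g i⟫ =
      (if i = j then 1 else 0) -
        ∑ k ∈ Finset.range (min i j), U i k * (starRingEnd ℂ) (U j k) := by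
  have hMtri : ∀ i j, i ≤ j → M i j = 0 := by
    intro i j h; rw [hM, if_neg (by omega)]
  have hMU := tri_inv_comm U M hUtri hMtri hUM
  set N : ℕ → ℕ → ℂ := fun n k => if n = k then 1 else U n k with hNdef
  have hNz : ∀ a b, a < b → N a b = 0 := by
    intro a b h
    simp only [hNdef]
    rw [if_neg (by omega)]
    exact hUtri a b (le_of_lt h)
  -- Step 2: formula for g
  have hgN : ∀ n, g n = ∑ k ∈ Finset.range (n + 1), N n k • e k := by
    intro n
    induction n using Nat.strong_induction_on with
    | _ n ih =>
      rcases Nat.eq_zero_or_pos n with h0 | hpos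
      · subst h0; simp [hg0, hNdef]
      · rw [hg n hpos]
        have step1 : ∑ x ∈ Finset.range n, ⟪e x, e n⟫ • g x
            = ∑ k ∈ Finset.range n, (∑ x ∈ Finset.range n, M n x * N x k) • e k := by
          have : ∀ x ∈ Finset.range n, ⟪e x, e n⟫ • g x
              = ∑ k ∈ Finset.range n, (M n x * N x k) • e k := by
            intro x hx
            rw [Finset.mem_range] at hx
            have hMe : ⟪e x, e n⟫ = M n x := by rw [hM]; rw [if_pos hx]
            rw [ih x hx, Finset.smul_sum]
            have hext : ∑ k ∈ Finset.range (x + 1), (M n x * N x k) • e k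
                = ∑ k ∈ Finset.range n, (M n x * N x k) • e k := by
              apply Finset.sum_subset (Finset.range_subset_range.2 (by omega))
              intro k hk hk'
              simp only [Finset.mem_range, not_lt] at hk hk'
              rw [hNz x k (by omega), mul_zero, zero_smul]
            rw [← hext]
            apply Finset.sum_congr rfl
            intro k _
            rw [smul_smul, hMe]
          rw [Finset.sum_congr rfl this, Finset.sum_comm]
          apply Finset.sum_congr rfl
          intro k _
          rw [Finset.sum_smul]
        have coeff : ∀ k ∈ Finset.range n, (∑ x ∈ Finset.range n, M n x * N x k) = -U n k := by
          intro k hk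
          rw [Finset.mem_range] at hk
          have h1 := hMU n k
          rw [Finset.sum_range_succ, if_pos rfl, one_mul, if_neg (by omega : ¬ n = k)] at h1
          have h2 : ∑ x ∈ Finset.range n, (if n = x then 1 else M n x) * (if x = k then 1 else U x k)
              = ∑ x ∈ Finset.range n, M n x * N x k := by
            apply Finset.sum_congr rfl
            intro x hx
            rw [Finset.mem_range] at hx
            rw [if_neg (by omega : ¬ n = x)]
          rw [h2] at h1
          rw [show (if n = k then (1:ℂ) else 0) = 0 from if_neg (by omega)] at h1
          linear_combination h1
        rw [step1, Finset.sum_congr rfl (fun k hk => by rw [coeff k hk]),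
          Finset.sum_range_succ]
        have : N n n = 1 := by simp [hNdef]
        rw [this, one_smul]
        rw [show (∑ k ∈ Finset.range n, (-U n k) • e k) = -∑ k ∈ Finset.range n, U n k • e k by
          rw [← Finset.sum_neg_distrib]; exact Finset.sum_congr rfl fun k _ => by rw [neg_smul]]
        have hcong : ∀ k ∈ Finset.range n, N n k • e k = U n k • e k := by
          intro k hk
          rw [Finset.mem_range] at hk
          simp only [hNdef]
          rw [if_neg (by omega)]
        rw [Finset.sum_congr rfl hcong]
        abel
  -- Step 3: compute the Gram matrix of g
  have gram : ∀ k l, ⟪e k, e l⟫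
      = (if k = l then 1 else 0) + M l k + (starRingEnd ℂ) (M k l) := by
    intro k l
    rcases lt_trichotomy k l with h | h | h
    · rw [hM l k, hM k l, if_pos h, if_neg (by omega), if_neg (by omega)]
      simp
    · subst h
      rw [hM k k, if_neg (lt_irrefl k)]
      have h1 : ⟪e k, e k⟫ = ((‖e k‖ : ℂ)) ^ 2 := inner_self_eq_norm_sq_to_K (e k)
      rw [h1, he k]
      simp
    · rw [hM k l, hM l k, if_pos h, if_neg (by omega), if_neg (by omega),
        ← inner_conj_symm (e l) (e k)]
      simp
  have key : ∀ (a k : ℕ), (∑ l ∈ Finset.range (a + 1), N a l * M l k)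
      = (if a = k then 1 else 0) - (if k ∈ Finset.range (a + 1) then N a k else 0) := by
    intro a k
    have h1 := hUM a k
    have h2 : ∑ l ∈ Finset.range (a + 1),
        (if a = l then 1 else U a l) * (if l = k then 1 else M l k)
        = ∑ l ∈ Finset.range (a + 1), (N a l * M l k + (if l = k then N a k else 0)) := by
      apply Finset.sum_congr rfl
      intro l _
      simp only [hNdef]
      by_cases hl : l = k
      · subst hl
        simp [hMtri l l le_rfl]
      · rw [if_neg hl, if_neg hl]
        ring
    rw [h2, Finset.sum_add_distrib,
      Finset.sum_ite_eq' (Finset.range (a + 1)) k (fun _ => N a k)] at h1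
    linear_combination h1
  intro i j
  have hRm : Finset.range (j + 1) ∩ Finset.range (i + 1) = Finset.range (min i j + 1) := by
    ext x; simp; omega
  rw [hgN i, hgN j, sum_inner]
  simp only [inner_sum, inner_smul_left, inner_smul_right, Finset.mul_sum]
  have hG : ∀ k l, N i l * ((starRingEnd ℂ) (N j k) * ⟪e k, e l⟫)
      = ((starRingEnd ℂ) (N j k) * (if k = l then N i l else 0))
        + ((starRingEnd ℂ) (N j k) * (N i l * M l k))
        + (N i l * (starRingEnd ℂ) (N j k * M k l)) := by
    intro k l
    rw [gram k l, map_mul]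
    by_cases hkl : k = l
    · rw [if_pos hkl, if_pos hkl]; ring
    · rw [if_neg hkl, if_neg hkl]; ring
  rw [Finset.sum_congr rfl (fun k _ => Finset.sum_congr rfl (fun l _ => hG k l))]
  simp only [Finset.sum_add_distrib]
  have hT1 : (∑ k ∈ Finset.range (j + 1), ∑ l ∈ Finset.range (i + 1),
      (starRingEnd ℂ) (N j k) * (if k = l then N i l else 0))
      = ∑ k ∈ Finset.range (min i j + 1), (starRingEnd ℂ) (N j k) * N i k := by
    have h1 : ∀ k ∈ Finset.range (j + 1), (∑ l ∈ Finset.range (i + 1),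
        (starRingEnd ℂ) (N j k) * (if k = l then N i l else 0))
        = (if k ∈ Finset.range (i + 1) then (starRingEnd ℂ) (N j k) * N i k else 0) := by
      intro k _
      rw [← Finset.mul_sum, Finset.sum_ite_eq, mul_ite, mul_zero]
    rw [Finset.sum_congr rfl h1, Finset.sum_ite_mem, hRm]
  have hT2 : (∑ k ∈ Finset.range (j + 1), ∑ l ∈ Finset.range (i + 1),
      (starRingEnd ℂ) (N j k) * (N i l * M l k))
      = (if i ∈ Finset.range (j + 1) then (starRingEnd ℂ) (N j i) else 0)
        - ∑ k ∈ Finset.range (min i j + 1), (starRingEnd ℂ) (N j k) * N i k := by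
    have h1 : ∀ k ∈ Finset.range (j + 1), (∑ l ∈ Finset.range (i + 1),
        (starRingEnd ℂ) (N j k) * (N i l * M l k))
        = (if i = k then (starRingEnd ℂ) (N j k) else 0)
          - (if k ∈ Finset.range (i + 1) then (starRingEnd ℂ) (N j k) * N i k else 0) := by
      intro k _
      rw [← Finset.mul_sum, key i k, mul_sub, mul_ite, mul_one, mul_zero, mul_ite, mul_zero]
    rw [Finset.sum_congr rfl h1, Finset.sum_sub_distrib, Finset.sum_ite_eq,
      Finset.sum_ite_mem, hRm]
  have hT3 : (∑ k ∈ Finset.range (j + 1), ∑ l ∈ Finset.range (i + 1),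
      N i l * (starRingEnd ℂ) (N j k * M k l))
      = (if j ∈ Finset.range (i + 1) then N i j else 0)
        - ∑ k ∈ Finset.range (min i j + 1), (starRingEnd ℂ) (N j k) * N i k := by
    rw [Finset.sum_comm]
    have h1 : ∀ l ∈ Finset.range (i + 1), (∑ k ∈ Finset.range (j + 1),
        N i l * (starRingEnd ℂ) (N j k * M k l))
        = (if j = l then N i l else 0)
          - (if l ∈ Finset.range (j + 1) then N i l * (starRingEnd ℂ) (N j l) else 0) := by
      intro l _
      have h2 : ∑ k ∈ Finset.range (j + 1), N i l * (starRingEnd ℂ) (N j k * M k l)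
          = N i l * (starRingEnd ℂ) (∑ k ∈ Finset.range (j + 1), N j k * M k l) := by
        rw [map_sum, ← Finset.mul_sum]
      rw [h2, key j l, map_sub]
      rw [show (starRingEnd ℂ) (if j = l then (1 : ℂ) else 0) = (if j = l then 1 else 0) from by
        split <;> simp]
      rw [show (starRingEnd ℂ) (if l ∈ Finset.range (j + 1) then N j l else 0)
          = (if l ∈ Finset.range (j + 1) then (starRingEnd ℂ) (N j l) else 0) from by
        split <;> simp]
      rw [mul_sub, mul_ite, mul_one, mul_zero, mul_ite, mul_zero]
    rw [Finset.sum_congr rfl h1, Finset.sum_sub_distrib, Finset.sum_ite_eq, Finset.sum_ite_mem]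
    have h3 : Finset.range (i + 1) ∩ Finset.range (j + 1) = Finset.range (min i j + 1) := by
      ext x; simp
    rw [h3]
    congr 1
    apply Finset.sum_congr rfl
    intro k _
    ring
  rw [hT1, hT2, hT3]
  have hA : (∑ k ∈ Finset.range (min i j + 1), (starRingEnd ℂ) (N j k) * N i k)
      = (∑ k ∈ Finset.range (min i j), U i k * (starRingEnd ℂ) (U j k))
        + (starRingEnd ℂ) (N j (min i j)) * N i (min i j) := by
    rw [Finset.sum_range_succ]
    congr 1
    apply Finset.sum_congr rfl
    intro k hk
    rw [Finset.mem_range] at hk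
    have h1 : N j k = U j k := by simp only [hNdef]; rw [if_neg (by omega)]
    have h2 : N i k = U i k := by simp only [hNdef]; rw [if_neg (by omega)]
    rw [h1, h2]; ring
  rw [hA]
  rcases lt_trichotomy i j with h | h | h
  · have hmi : min i j = i := by omega
    rw [hmi] at *
    rw [if_pos (by simp; omega), if_neg (by simp; omega), if_neg (by omega)]
    have h1 : N j i = U j i := by simp only [hNdef]; rw [if_neg (by omega)]
    have h2 : N i i = 1 := by simp [hNdef]
    rw [h1, h2]
    ring
  · subst h
    rw [min_self]
    rw [if_pos (by simp), if_pos (by simp), if_pos rfl]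
    have h2 : N i i = 1 := by simp [hNdef]
    rw [h2]
    simp
    ring
  · have hmi : min i j = j := by omega
    rw [hmi] at *
    rw [if_neg (by simp; omega), if_pos (by simp; omega), if_neg (by omega)]
    have h1 : N i j = U i j := by simp only [hNdef]; rw [if_neg (by omega)]
    have h2 : N j j = 1 := by simp [hNdef]
    rw [h1, h2]
    simp only [map_one]
    ring
end

section
/- Two normalized Bessel sequences {g_n} and {g'_n} obtained via the Kaczmarz algorithm from unit vector sequences {e_n} and {e'_n} are unitarily equivalent (g'_n = Vg_n for a unitary V) if and only if UU* = U'U'*, where U, U' are the strictly lower triangular matrices with (I+U)(I+M) = I and (I+U')(I+M') = I, M, M' being the strictly lower triangular parts of the Gram matrices of {e_n}, {e'_n}. -/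
/-!
The Kaczmarz recursion says `e = (I + M) g`, so `(I + U)(I + M) = I` gives `g = (I + U) e`.
Taking Gram matrices with entries `⟪x j, x i⟫` (the transpose of `Matrix.gram`), that of the
unit vectors `e` is `B + B* - I` with `B = I + M`, hence that of `g` is
`A B A* + A (A B)* - A A* = A* + A - A A* = I - U U*` for `A = I + U`.
So `U U* = U' U'*` says exactly that `g` and `g'` have the same Gram matrix, and for sequences
with dense span in Hilbert spaces this is unitary equivalence: `∑ cₙ gₙ ↦ ∑ cₙ g'ₙ` is
isometric on finite combinations and extends by continuity.
Since all matrices involved are triangular, every identity can be checked on the leading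
`n × n` blocks, where it is finite-dimensional matrix algebra.
-/

open scoped InnerProductSpace ComplexConjugate
open Matrix

section DenseSpan

variable {𝕜 E F ι : Type*} [RCLike 𝕜]
  [NormedAddCommGroup E] [InnerProductSpace 𝕜 E] [NormedAddCommGroup F] [InnerProductSpace 𝕜 F]

theorem inner_linearCombination_eq_of_inner_eq {v : ι → E} {w : ι → F}
    (h : ∀ i j, ⟪v i, v j⟫_𝕜 = ⟪w i, w j⟫_𝕜) (c d : ι →₀ 𝕜) :
    ⟪Finsupp.linearCombination 𝕜 v c, Finsupp.linearCombination 𝕜 v d⟫_𝕜 =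
      ⟪Finsupp.linearCombination 𝕜 w c, Finsupp.linearCombination 𝕜 w d⟫_𝕜 := by
  simp [Finsupp.linearCombination_apply, Finsupp.sum, sum_inner, inner_sum, inner_smul_left,
    inner_smul_right, h]

theorem denseRange_linearCombination {v : ι → E}
    (hv : (Submodule.span 𝕜 (Set.range v)).topologicalClosure = ⊤) :
    DenseRange (Finsupp.linearCombination 𝕜 v) := by
  rw [DenseRange, ← LinearMap.coe_range, Finsupp.range_linearCombination]
  exact Submodule.dense_iff_topologicalClosure_eq_top.2 hv

theorem exists_linearIsometryEquiv_map_eq_iff [CompleteSpace E] [CompleteSpace F]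
    {v : ι → E} {w : ι → F}
    (hv : (Submodule.span 𝕜 (Set.range v)).topologicalClosure = ⊤)
    (hw : (Submodule.span 𝕜 (Set.range w)).topologicalClosure = ⊤) :
    (∃ V : E ≃ₗᵢ[𝕜] F, ∀ i, V (v i) = w i) ↔ ∀ i j, ⟪v i, v j⟫_𝕜 = ⟪w i, w j⟫_𝕜 := by
  refine ⟨fun ⟨V, hV⟩ i j => by rw [← hV, ← hV, V.inner_map_map], fun h => ?_⟩
  have hnorm (c : ι →₀ 𝕜) :
      ‖Finsupp.linearCombination 𝕜 w c‖ = ‖Finsupp.linearCombination 𝕜 v c‖ := by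
    rw [norm_eq_sqrt_re_inner (𝕜 := 𝕜), norm_eq_sqrt_re_inner (𝕜 := 𝕜),
      inner_linearCombination_eq_of_inner_eq h]
  refine ⟨(LinearEquiv.refl 𝕜 (ι →₀ 𝕜)).extendOfIsometry _ _
    (denseRange_linearCombination hv) (denseRange_linearCombination hw) hnorm, fun i => ?_⟩
  simpa using (LinearEquiv.refl 𝕜 (ι →₀ 𝕜)).extendOfIsometry_eq _ _
    (denseRange_linearCombination hv) (denseRange_linearCombination hw) hnorm (Finsupp.single i 1)

end DenseSpan

theorem Matrix.eq_sum_smul_of_mul_eq_one {R M ι : Type*} [Semiring R] [AddCommMonoid M]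
    [Module R M] [Fintype ι] [DecidableEq ι] {A B : Matrix ι ι R} (hAB : A * B = 1) {x y : ι → M}
    (hy : ∀ i, y i = ∑ k, B i k • x k) (i : ι) : x i = ∑ k, A i k • y k := by
  simp_rw [hy, Finset.smul_sum, smul_smul]
  rw [Finset.sum_comm]
  simp_rw [← Finset.sum_smul, ← mul_apply, hAB, one_apply, ite_smul, one_smul, zero_smul,
    Finset.sum_ite_eq, Finset.mem_univ, if_true]

theorem Matrix.transpose_gram_sum_smul {𝕜 E ι : Type*} [RCLike 𝕜] [SeminormedAddCommGroup E]
    [InnerProductSpace 𝕜 E] [Fintype ι] (A : Matrix ι ι 𝕜) (v : ι → E) :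
    (gram 𝕜 fun i => ∑ k, A i k • v k)ᵀ = A * (gram 𝕜 v)ᵀ * Aᴴ := by
  ext i j
  simp only [transpose_apply, gram_apply, mul_apply, conjTranspose_apply, sum_inner, inner_sum,
    inner_smul_left, inner_smul_right, Finset.sum_mul, Finset.mul_sum, RCLike.star_def]
  rw [Finset.sum_comm]
  refine Finset.sum_congr rfl fun a _ => Finset.sum_congr rfl fun b _ => ?_
  ring

def leadingBlock {R : Type*} (n : ℕ) (X : ℕ → ℕ → R) : Matrix (Fin n) (Fin n) R :=
  of fun i j => X i j

@[simp]
theorem leadingBlock_apply {R : Type*} (n : ℕ) (X : ℕ → ℕ → R) (i j : Fin n) :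
    leadingBlock n X i j = X i j := rfl

theorem one_add_leadingBlock_apply {R : Type*} [AddMonoidWithOne R] {X : ℕ → ℕ → R}
    (hX : ∀ i, X i i = 0) {n : ℕ} (i j : Fin n) :
    (1 + leadingBlock n X) i j = if (i : ℕ) = j then 1 else X i j := by
  by_cases h : i = j
  · subst h; simp [hX]
  · simp [one_apply_ne h, Fin.val_ne_of_ne h]

section Kaczmarz

variable {𝕜 H : Type*} [RCLike 𝕜] [NormedAddCommGroup H] [InnerProductSpace 𝕜 H]
  {e g : ℕ → H} {M U : ℕ → ℕ → 𝕜}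

theorem eq_add_sum_smul_of_kaczmarz (hg0 : g 0 = e 0)
    (hg : ∀ n, 0 < n → g n = e n - ∑ i ∈ Finset.range n, ⟪e i, e n⟫_𝕜 • g i)
    (hM : ∀ i j, M i j = if j < i then ⟪e j, e i⟫_𝕜 else 0) (n : ℕ) :
    e n = g n + ∑ k ∈ Finset.range n, M n k • g k := by
  rcases Nat.eq_zero_or_pos n with rfl | hn
  · simp [hg0]
  · have hMn : ∑ k ∈ Finset.range n, M n k • g k = ∑ k ∈ Finset.range n, ⟪e k, e n⟫_𝕜 • g k :=
      Finset.sum_congr rfl fun k hk => by rw [hM, if_pos (Finset.mem_range.1 hk)]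
    rw [hMn, hg n hn, sub_add_cancel]

theorem eq_sum_one_add_leadingBlock_smul (hg0 : g 0 = e 0)
    (hg : ∀ n, 0 < n → g n = e n - ∑ i ∈ Finset.range n, ⟪e i, e n⟫_𝕜 • g i)
    (hM : ∀ i j, M i j = if j < i then ⟪e j, e i⟫_𝕜 else 0) {N : ℕ} (i : Fin N) :
    e i = ∑ k, (1 + leadingBlock N M) i k • g k := by
  have hM_upper (k : ℕ) (hk : i ≤ k) : M i k = 0 := by rw [hM, if_neg (by omega)]
  simp only [Matrix.add_apply, add_smul, Finset.sum_add_distrib, one_apply, ite_smul, one_smul,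
    zero_smul, Finset.sum_ite_eq, Finset.mem_univ, if_true, leadingBlock_apply]
  rw [eq_add_sum_smul_of_kaczmarz hg0 hg hM, Fin.sum_univ_eq_sum_range (fun k => M i k • g k)]
  congr 1
  refine Finset.sum_subset (Finset.range_subset_range.2 i.is_lt.le) fun k _ hk => ?_
  rw [hM_upper k (by simpa using hk), zero_smul]

theorem one_add_leadingBlock_mul_one_add_leadingBlock
    (hU : ∀ i j, i ≤ j → U i j = 0) (hM0 : ∀ i, M i i = 0)
    (hUM : ∀ i j, (∑ k ∈ Finset.range (i + 1),
        (if i = k then 1 else U i k) * (if k = j then 1 else M k j)) = if i = j then 1 else 0)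
    (n : ℕ) : (1 + leadingBlock n U) * (1 + leadingBlock n M) = 1 := by
  ext i j
  have hUMij := hUM i j
  simp only [Fin.val_inj] at hUMij
  rw [mul_apply, one_apply, ← hUMij]
  simp only [one_add_leadingBlock_apply (fun i => hU i i le_rfl), one_add_leadingBlock_apply hM0]
  rw [Fin.sum_univ_eq_sum_range
    (fun k => (if (i : ℕ) = k then 1 else U i k) * (if k = j then 1 else M k j))]
  refine (Finset.sum_subset (Finset.range_subset_range.2 i.is_lt) fun k _ hk => ?_).symm
  have hik : (i : ℕ) < k := by simpa using hk
  rw [if_neg hik.ne, hU i k hik.le, zero_mul]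

theorem transpose_gram_eq_of_norm_eq_one (he : ∀ n, ‖e n‖ = 1)
    (hM : ∀ i j, M i j = if j < i then ⟪e j, e i⟫_𝕜 else 0) (n : ℕ) :
    (gram 𝕜 fun i : Fin n => e i)ᵀ = (1 + leadingBlock n M) + (1 + leadingBlock n M)ᴴ - 1 := by
  have hM0 (i : ℕ) : M i i = 0 := by simp [hM]
  ext i j
  simp only [transpose_apply, gram_apply, Matrix.sub_apply, Matrix.add_apply, conjTranspose_apply,
    one_add_leadingBlock_apply hM0, one_apply, ← Fin.val_inj, hM]
  rcases lt_trichotomy (i : ℕ) j with h | h | h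
  · simp [h.ne, h.ne', h, h.not_gt, inner_conj_symm]
  · simp [h, inner_self_eq_norm_sq_to_K, he]
  · simp [h.ne, h.ne', h, h.not_gt]

theorem transpose_gram_kaczmarz (he : ∀ n, ‖e n‖ = 1) (hg0 : g 0 = e 0)
    (hg : ∀ n, 0 < n → g n = e n - ∑ i ∈ Finset.range n, ⟪e i, e n⟫_𝕜 • g i)
    (hM : ∀ i j, M i j = if j < i then ⟪e j, e i⟫_𝕜 else 0) (hU : ∀ i j, i ≤ j → U i j = 0)
    (hUM : ∀ i j, (∑ k ∈ Finset.range (i + 1),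
        (if i = k then 1 else U i k) * (if k = j then 1 else M k j)) = if i = j then 1 else 0)
    (n : ℕ) :
    (gram 𝕜 fun i : Fin n => g i)ᵀ = 1 - leadingBlock n U * (leadingBlock n U)ᴴ := by
  set A := 1 + leadingBlock n U
  set B := 1 + leadingBlock n M
  have hAB : A * B = 1 :=
    one_add_leadingBlock_mul_one_add_leadingBlock hU (fun i => by simp [hM]) hUM n
  have hg_eq : (fun i : Fin n => g i) = fun i => ∑ k, A i k • e k :=
    funext (Matrix.eq_sum_smul_of_mul_eq_one hAB (eq_sum_one_add_leadingBlock_smul hg0 hg hM))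
  calc (gram 𝕜 fun i : Fin n => g i)ᵀ = A * (B + Bᴴ - 1) * Aᴴ := by
        rw [hg_eq, transpose_gram_sum_smul, transpose_gram_eq_of_norm_eq_one he hM]
    _ = A * B * Aᴴ + A * (A * B)ᴴ - A * Aᴴ := by rw [conjTranspose_mul]; noncomm_ring
    _ = 1 - leadingBlock n U * (leadingBlock n U)ᴴ := by
        rw [hAB, conjTranspose_one]
        simp only [A, conjTranspose_add, conjTranspose_one]
        noncomm_ring

theorem inner_kaczmarz (he : ∀ n, ‖e n‖ = 1) (hg0 : g 0 = e 0)
    (hg : ∀ n, 0 < n → g n = e n - ∑ i ∈ Finset.range n, ⟪e i, e n⟫_𝕜 • g i)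
    (hM : ∀ i j, M i j = if j < i then ⟪e j, e i⟫_𝕜 else 0) (hU : ∀ i j, i ≤ j → U i j = 0)
    (hUM : ∀ i j, (∑ k ∈ Finset.range (i + 1),
        (if i = k then 1 else U i k) * (if k = j then 1 else M k j)) = if i = j then 1 else 0)
    (i j : ℕ) :
    ⟪g j, g i⟫_𝕜 =
      (if i = j then 1 else 0) - ∑ k ∈ Finset.range (min i j), U i k * conj (U j k) := by
  set n := max i j + 1
  have hi : i < n := by omega
  have hj : j < n := by omega
  have hgram :=
    congrFun (congrFun (transpose_gram_kaczmarz he hg0 hg hM hU hUM n) ⟨i, hi⟩) ⟨j, hj⟩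
  simp only [transpose_apply, gram_apply, Matrix.sub_apply, one_apply, Fin.mk.injEq, mul_apply,
    conjTranspose_apply, leadingBlock_apply, RCLike.star_def] at hgram
  rw [hgram, Fin.sum_univ_eq_sum_range (fun k => U i k * conj (U j k)) n]
  congr 1
  refine (Finset.sum_subset (Finset.range_subset_range.2 (by omega)) fun k _ hk => ?_).symm
  rcases min_le_iff.1 (not_lt.1 (Finset.mem_range.not.1 hk)) with hik | hjk
  · rw [hU i k hik, zero_mul]
  · rw [hU j k hjk, map_zero, mul_zero]

end Kaczmarz

open scoped ComplexInnerProductSpace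

theorem kaczmarz_unitary_equivalence_iff
    {H : Type*} [NormedAddCommGroup H] [InnerProductSpace ℂ H] [CompleteSpace H]
    {H' : Type*} [NormedAddCommGroup H'] [InnerProductSpace ℂ H'] [CompleteSpace H']
    (e g : ℕ → H) (e' g' : ℕ → H')
    (he : ∀ n, ‖e n‖ = 1) (he' : ∀ n, ‖e' n‖ = 1)
    (hg0 : g 0 = e 0)
    (hg : ∀ n, 0 < n → g n = e n - ∑ i ∈ Finset.range n, ⟪e i, e n⟫ • g i)
    (hg0' : g' 0 = e' 0)
    (hg' : ∀ n, 0 < n → g' n = e' n - ∑ i ∈ Finset.range n, ⟪e' i, e' n⟫ • g' i)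
    (hdense : (Submodule.span ℂ (Set.range g)).topologicalClosure = ⊤)
    (hdense' : (Submodule.span ℂ (Set.range g')).topologicalClosure = ⊤)
    (M U : ℕ → ℕ → ℂ) (M' U' : ℕ → ℕ → ℂ)
    (hM : ∀ i j, M i j = if j < i then ⟪e j, e i⟫ else 0)
    (hM' : ∀ i j, M' i j = if j < i then ⟪e' j, e' i⟫ else 0)
    (hUtri : ∀ i j, i ≤ j → U i j = 0)
    (hUtri' : ∀ i j, i ≤ j → U' i j = 0)
    (hUM : ∀ i j, (∑ k ∈ Finset.range (i + 1),
        (if i = k then 1 else U i k) * (if k = j then 1 else M k j)) =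
      if i = j then 1 else 0)
    (hUM' : ∀ i j, (∑ k ∈ Finset.range (i + 1),
        (if i = k then 1 else U' i k) * (if k = j then 1 else M' k j)) =
      if i = j then 1 else 0) :
    -- `{g_n}` and `{g'_n}` are unitarily equivalent iff `UU* = U'U'*` entrywise.
    (∃ V : H ≃ₗᵢ[ℂ] H', ∀ n, V (g n) = g' n) ↔
      ∀ i j : ℕ, (∑ k ∈ Finset.range (min i j), U i k * (starRingEnd ℂ) (U j k)) =
        ∑ k ∈ Finset.range (min i j), U' i k * (starRingEnd ℂ) (U' j k) := by
  rw [exists_linearIsometryEquiv_map_eq_iff hdense hdense', forall_comm]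
  simp only [inner_kaczmarz he hg0 hg hM hUtri hUM, inner_kaczmarz he' hg0' hg' hM' hUtri' hUM',
    sub_right_inj]
end
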